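/- arXiv:math/0608446 — 4 statements merged into one kernel-verified Lean document; each statement's English description precedes it below -/
import Mathlib

section
/- For connected skew diagrams D and E = WOW satisfying Hypotheses (I)–(III), one has (D ∘_W E)^* = D^* ∘_{W^*} E^* as skew diagrams (up to translation); here the antipodal rotation E^* equals W^*O^*W^* and again satisfies Hypotheses (I)–(III). -/
open scoped Classical

/-! # Skew diagrams, the composition `D ∘_W E`, and the hypotheses (I)–(V) -/

/-- A cell of the plane: (row, column), rows increasing southwards,
columns increasing eastwards. -/
abbrev Cell := ℤ × ℤ

/-- Translation of a diagram by a vector. -/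
def translateD (v : Cell) (D : Finset Cell) : Finset Cell := D.image (fun c => c + v)

/-- A partition as a list: weakly decreasing, all parts positive. -/
def IsPartitionList (l : List ℕ) : Prop := l.Pairwise (· ≥ ·) ∧ ∀ x ∈ l, 0 < x

/-- The cells of the skew diagram λ/μ: {(i,j) : 1 ≤ i ≤ ℓ(λ), μ_i < j ≤ λ_i}. -/
noncomputable def skewCells (lam mu : List ℕ) : Finset Cell :=
  (Finset.Icc (1 : ℤ) (lam.length : ℤ) ×ˢ Finset.Icc (1 : ℤ) ((lam.foldr max 0 : ℕ) : ℤ)).filter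
    (fun c => ((mu.getD ((c.1 - 1).toNat) 0 : ℕ) : ℤ) < c.2 ∧
              c.2 ≤ ((lam.getD ((c.1 - 1).toNat) 0 : ℕ) : ℤ))

/-- A finite set of cells is a skew diagram if, up to translation, it is of the form
λ/μ for partitions μ ⊆ λ. -/
def IsSkewDiagram (D : Finset Cell) : Prop :=
  ∃ (lam mu : List ℕ) (v : Cell), IsPartitionList lam ∧ IsPartitionList mu ∧
    (∀ i, mu.getD i 0 ≤ lam.getD i 0) ∧ D = translateD v (skewCells lam mu)

/-- Two cells are adjacent if they differ by (0,±1) or (±1,0). -/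
def CellAdj (c c' : Cell) : Prop :=
  (c.1 = c'.1 ∧ (c.2 = c'.2 + 1 ∨ c.2 + 1 = c'.2)) ∨
  (c.2 = c'.2 ∧ (c.1 = c'.1 + 1 ∨ c.1 + 1 = c'.1))

/-- A diagram is connected if it is nonempty and any two of its cells are joined by a
path of pairwise-adjacent cells of the diagram. -/
def IsConnectedDiagram (D : Finset Cell) : Prop :=
  D.Nonempty ∧ ∀ c ∈ D, ∀ c' ∈ D,
    Relation.ReflTransGen (fun a b => b ∈ D ∧ CellAdj a b) c c'

/-- The transpose of a diagram: reflection along the main diagonal. -/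
def transposeD (D : Finset Cell) : Finset Cell := D.image (fun c => (c.2, c.1))

/-- The antipodal rotation of a diagram: rotation by 180 degrees. -/
def rotateD (D : Finset Cell) : Finset Cell := D.image (fun c => (-c.1, -c.2))

/-- The northeasternmost cell of a (nonempty connected) diagram: the easternmost cell
of its northernmost row. -/
noncomputable def neCell (D : Finset Cell) : Cell :=
  let i := WithTop.untopD 0 ((D.image Prod.fst).min)
  (i, WithBot.unbotD 0 (((D.filter (fun c => c.1 = i)).image Prod.snd).max))

/-- The southwesternmost cell of a (nonempty connected) diagram: the westernmost cell
of its southernmost row. -/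
noncomputable def swCell (D : Finset Cell) : Cell :=
  let i := WithBot.unbotD 0 ((D.image Prod.fst).max)
  (i, WithTop.untopD 0 (((D.filter (fun c => c.1 = i)).image Prod.snd).min))

/-- The copy `W_ne` of `W` in the top of `E`: the translateD of `W` taking the
northeasternmost cell of `W` to the northeasternmost cell of `E`. -/
noncomputable def WneCopy (W E : Finset Cell) : Finset Cell :=
  translateD (neCell E - neCell W) W

/-- The copy `W_sw` of `W` in the bottom of `E`: the translateD of `W` taking the
southwesternmost cell of `W` to the southwesternmost cell of `E`. -/
noncomputable def WswCopy (W E : Finset Cell) : Finset Cell :=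
  translateD (swCell E - swCell W) W

/-- `W` lies in the top of `E`: `W` is empty, or `W` is a connected skew diagram whose
canonical copy containing the northeasternmost cell of `E` is contained in `E`. -/
def LiesInTop (W E : Finset Cell) : Prop :=
  W = ∅ ∨ (IsSkewDiagram W ∧ IsConnectedDiagram W ∧ WneCopy W E ⊆ E)

/-- `W` lies in the bottom of `E`. -/
def LiesInBottom (W E : Finset Cell) : Prop :=
  W = ∅ ∨ (IsSkewDiagram W ∧ IsConnectedDiagram W ∧ WswCopy W E ⊆ E)

/-- `E = WOW`: `E` is a connected skew diagram and `W` lies in its top and bottom. -/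
def IsWOW (E W : Finset Cell) : Prop :=
  IsSkewDiagram E ∧ IsConnectedDiagram E ∧ LiesInTop W E ∧ LiesInBottom W E

/-- The subdiagram `O` of `E = WOW`: the complement of the two copies of `W`. -/
noncomputable def Odiag (E W : Finset Cell) : Finset Cell :=
  E \ (WneCopy W E ∪ WswCopy W E)

/-- The lower copy of `W` is horizontally attached to `O`. -/
def LowerHoriz (E W : Finset Cell) : Prop :=
  (((swCell (Odiag E W)).1, (swCell (Odiag E W)).2 - 1) : Cell) ∈ WswCopy W E

/-- The lower copy of `W` is vertically attached to `O`. -/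
def LowerVert (E W : Finset Cell) : Prop :=
  (((swCell (Odiag E W)).1 + 1, (swCell (Odiag E W)).2) : Cell) ∈ WswCopy W E

/-- The upper copy of `W` is horizontally attached to `O`. -/
def UpperHoriz (E W : Finset Cell) : Prop :=
  (((neCell (Odiag E W)).1, (neCell (Odiag E W)).2 + 1) : Cell) ∈ WneCopy W E

/-- The upper copy of `W` is vertically attached to `O`. -/
def UpperVert (E W : Finset Cell) : Prop :=
  (((neCell (Odiag E W)).1 - 1, (neCell (Odiag E W)).2) : Cell) ∈ WneCopy W E

/-- Case (a): both copies of `W` are horizontally attached to `O`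
(the case `W = ∅` is regarded as case (a)). -/
def CaseA (E W : Finset Cell) : Prop :=
  W = ∅ ∨ (LowerHoriz E W ∧ UpperHoriz E W)

/-- Case (b): both copies of `W` are vertically attached to `O`. -/
def CaseB (E W : Finset Cell) : Prop :=
  W ≠ ∅ ∧ LowerVert E W ∧ UpperVert E W

/-- Case (c): the lower copy of `W` is horizontally attached and the upper copy is
vertically attached to `O`. -/
def CaseC (E W : Finset Cell) : Prop :=
  W ≠ ∅ ∧ LowerHoriz E W ∧ UpperVert E W

/-- Case (d): the lower copy of `W` is vertically attached and the upper copy is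
horizontally attached to `O`. -/
def CaseD (E W : Finset Cell) : Prop :=
  W ≠ ∅ ∧ LowerVert E W ∧ UpperHoriz E W

/-- The shift vector of the amalgamation `E ⨿_W E`: the translation taking the bottom
copy of `W` to the top copy of `W` (for `W = ∅`, the translation placing the
southwesternmost cell of the second copy one position east of the northeasternmost
cell of the first copy). -/
noncomputable def amalgShift (E W : Finset Cell) : Cell :=
  if W = ∅ then neCell E + (0, 1) - swCell E
  else (neCell E - neCell W) - (swCell E - swCell W)

/-- `E^{⨿_W r}`: the r-fold left-associated amalgamation of `E` with itself along `W`,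
with `E^{⨿_W 0} := W`. -/
noncomputable def amalgPow (E W : Finset Cell) (r : ℕ) : Finset Cell :=
  if r = 0 then W
  else (Finset.range r).biUnion (fun k =>
    translateD ((k : ℤ) * (amalgShift E W).1, (k : ℤ) * (amalgShift E W).2) E)

/-- The number of cells of `D` strictly northwest of `c` on the diagonal of `c`;
for a skew diagram this is the index of the ribbon of the northwest ribbon
decomposition on which `c` lies. -/
def depthNW (D : Finset Cell) (c : Cell) : ℕ :=
  (D.filter (fun c' => c'.2 - c'.1 = c.2 - c.1 ∧ c'.1 < c.1)).card

/-- The number of cells of `D` strictly southeast of `c` on the diagonal of `c`;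
for a skew diagram this is the index of the ribbon of the southeast ribbon
decomposition on which `c` lies. -/
def depthSE (D : Finset Cell) (c : Cell) : ℕ :=
  (D.filter (fun c' => c'.2 - c'.1 = c.2 - c.1 ∧ c.1 < c'.1)).card

/-- The translation vector of the copy `E_d` of `E` in `D ∘_W E` corresponding to the
cell `d` of `D`.  Writing `u` for the amalgamation shift, in cases (a)/(b) one has
`v(d) = (content of d)·u ± (row of d)·(1,1)`, and in cases (c)/(d) one has
`v(d) = (content of d)·u ± (ribbon index of d)·(1,1)`; this encodes exactly the
placement rules of the composition. -/
noncomputable def placeVec (D E W : Finset Cell) (d : Cell) : Cell :=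
  let u := amalgShift E W
  let k : ℤ :=
    if CaseA E W then d.1
    else if CaseB E W then -d.1
    else if CaseC E W then (depthNW D d : ℤ)
    else -(depthSE D d : ℤ)
  ((d.2 - d.1) * u.1 + k, (d.2 - d.1) * u.2 + k)

/-- The extra copies of `W` arising, in cases (c) and (d), from the pairs of vertically
adjacent cells of `D` lying on the same ribbon of the northwest (resp. southeast)
ribbon decomposition: the extra copy lies one position southeast (resp. northwest) of
the identified copy of `W` in `E_d ⨿_W E_{d'}`. -/
noncomputable def extraWs (D E W : Finset Cell) : Finset Cell :=
  if CaseC E W then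
    (D.filter (fun d => ((d.1 - 1, d.2) : Cell) ∈ D ∧
        depthNW D d = depthNW D (d.1 - 1, d.2))).biUnion
      (fun d => translateD (placeVec D E W d + (1, 1)) (WneCopy W E))
  else if CaseD E W then
    (D.filter (fun d => ((d.1 - 1, d.2) : Cell) ∈ D ∧
        depthSE D d = depthSE D (d.1 - 1, d.2))).biUnion
      (fun d => translateD (placeVec D E W d - (1, 1)) (WneCopy W E))
  else ∅

/-- The composition `D ∘_W E`: the union of the copies `E_d` of `E` for the cells `d`
of `D`, placed according to the rules of the composition, together with (in cases (c)
and (d)) the extra copies of `W`; with the convention `∅ ∘_W E = W`. -/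
noncomputable def composeWE (D E W : Finset Cell) : Finset Cell :=
  if D = ∅ then W
  else (D.biUnion (fun d => translateD (placeVec D E W d) E)) ∪ extraWs D E W

/-- The bi-infinite amalgamation `𝑬 = ⋯ ⨿_W E ⨿_W E ⨿_W ⋯` as a set of cells. -/
def bigE (E W : Finset Cell) : Set Cell :=
  {c | ∃ k : ℤ, (c.1 - k * (amalgShift E W).1, c.2 - k * (amalgShift E W).2) ∈ E}

/-- The diagram `Ō` associated to a copy of `O`: the cells of the copy having the cell
one position southeast of them also in the copy. -/
noncomputable def oBar (E W : Finset Cell) : Finset Cell :=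
  (Odiag E W).filter (fun c => ((c.1 + 1, c.2 + 1) : Cell) ∈ Odiag E W)

/-- The diagram `W̄` associated to a copy `W₁` of `W` in `𝑬`:
`{c ∈ 𝑬 : c+(1,1) ∈ W₁} ∪ {c ∈ W₁ : c+(1,1) ∈ 𝑬}` (computed here for the canonical
bottom copy of `W`). -/
noncomputable def wBar (E W : Finset Cell) : Finset Cell :=
  ((WswCopy W E).image (fun c => ((c.1 - 1, c.2 - 1) : Cell))).filter (fun c => c ∈ bigE E W)
    ∪ (WswCopy W E).filter (fun c => (((c.1 + 1, c.2 + 1) : Cell)) ∈ bigE E W)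

/-- Hypothesis (I): `W` is maximal, i.e. there is no skew diagram `W' ⊋ W` occupying
the same set of diagonals as `W` that also lies in the top and the bottom of `E`. -/
def HypI (E W : Finset Cell) : Prop :=
  ¬ ∃ W' : Finset Cell, IsSkewDiagram W' ∧ LiesInTop W' E ∧ LiesInBottom W' E ∧
      WneCopy W E ⊂ WneCopy W' E ∧ WswCopy W E ⊂ WswCopy W' E ∧
      (WneCopy W' E).image (fun c => c.2 - c.1) = (WneCopy W E).image (fun c => c.2 - c.1)

/-- Hypothesis (II): `W_ne` and `W_sw` are separated by at least one diagonal. -/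
def HypII (E W : Finset Cell) : Prop :=
  ∃ t : ℤ, (∀ x ∈ WswCopy W E, x.2 - x.1 < t) ∧ (∀ x ∈ WneCopy W E, t < x.2 - x.1)

/-- Hypothesis (III): the complement in `E` of either copy of `W` is a connected skew
diagram. -/
def HypIII (E W : Finset Cell) : Prop :=
  IsSkewDiagram (E \ WneCopy W E) ∧ IsConnectedDiagram (E \ WneCopy W E) ∧
  IsSkewDiagram (E \ WswCopy W E) ∧ IsConnectedDiagram (E \ WswCopy W E)

/-- Hypothesis (IV): in `𝑬`, no copy of `Ō` is adjacent to a copy of `W̄` (the copies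
being the translates of the canonical ones by multiples of the amalgamation shift). -/
def HypIV (E W : Finset Cell) : Prop :=
  ∀ k l : ℤ, ∀ x ∈ oBar E W, ∀ y ∈ wBar E W,
    ¬ CellAdj
      (x.1 + k * (amalgShift E W).1, x.2 + k * (amalgShift E W).2)
      (y.1 + l * (amalgShift E W).1, y.2 + l * (amalgShift E W).2)

/-- Hypothesis (V): if `E` is in case (a) or case (b), then at least one copy of `W`
in `E` has exactly one cell adjacent to `O`. -/
def HypV (E W : Finset Cell) : Prop :=
  (CaseA E W ∨ CaseB E W) →
    ((WneCopy W E).filter (fun x => ∃ y ∈ Odiag E W, CellAdj x y)).card = 1 ∨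
    ((WswCopy W E).filter (fun x => ∃ y ∈ Odiag E W, CellAdj x y)).card = 1

/-!
Rotation by 180 degrees is an involution of the plane exchanging north-east and south-west. It
therefore exchanges the top and bottom copies of `W`, the upper and lower attachments to `O`,
cases (c) and (d), and the northwest and southeast ribbon decompositions (`depthNW` and
`depthSE`), while it negates rows and contents and fixes the amalgamation shift. Hence the
placement vector of `-d` in `D^* ∘ E^*` is minus that of `d` in `D ∘ E`, and the extra copies of
`W` of case (c) rotate to those of case (d): `(D ∘_W E)^* = D^* ∘_{W^*} E^*` without any
translation. This needs each copy of `W` to be attached to `O` in exactly one way and one of the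
cases (a)–(d) to occur (otherwise `placeVec` falls into its default branch for both `E` and
`E^*`, which do not match); both follow from the order-convexity of skew diagrams together with
Hypotheses (II) and (III). The hypotheses transfer to `E^*` because rotation exchanges `W_ne` and
`W_sw`.
-/

section Plane

@[simp] lemma mem_translateD {v x : Cell} {X : Finset Cell} :
    x ∈ translateD v X ↔ x - v ∈ X := by
  simp only [translateD, Finset.mem_image]
  exact ⟨fun ⟨a, ha, h⟩ => by rwa [← h, add_sub_cancel_right],
    fun h => ⟨x - v, h, sub_add_cancel x v⟩⟩

@[simp] lemma mem_rotateD {x : Cell} {X : Finset Cell} : x ∈ rotateD X ↔ -x ∈ X := by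
  simp only [rotateD, Finset.mem_image]
  exact ⟨fun ⟨a, ha, h⟩ => by rwa [← h, Prod.neg_mk, neg_neg, neg_neg],
    fun h => ⟨-x, h, by simp⟩⟩

lemma rotateD_eq_image_neg (X : Finset Cell) : rotateD X = X.image Neg.neg := rfl

@[simp] lemma rotateD_rotateD (X : Finset Cell) : rotateD (rotateD X) = X := by
  ext x; simp

@[simp] lemma rotateD_eq_empty_iff {X : Finset Cell} : rotateD X = ∅ ↔ X = ∅ :=
  Finset.image_eq_empty

@[simp] lemma translateD_eq_empty_iff {v : Cell} {X : Finset Cell} :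
    translateD v X = ∅ ↔ X = ∅ :=
  Finset.image_eq_empty

@[simp] lemma rotateD_nonempty_iff {X : Finset Cell} : (rotateD X).Nonempty ↔ X.Nonempty :=
  Finset.image_nonempty

@[simp] lemma translateD_nonempty_iff {v : Cell} {X : Finset Cell} :
    (translateD v X).Nonempty ↔ X.Nonempty :=
  Finset.image_nonempty

@[simp] lemma translateD_zero (X : Finset Cell) : translateD 0 X = X := by
  ext x; simp

lemma translateD_translateD (v w : Cell) (X : Finset Cell) :
    translateD v (translateD w X) = translateD (v + w) X := by
  ext x; simp [sub_sub]

lemma rotateD_translateD (v : Cell) (X : Finset Cell) :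
    rotateD (translateD v X) = translateD (-v) (rotateD X) := by
  ext x; simp [neg_add_eq_sub]

@[simp] lemma rotateD_subset_rotateD_iff {X Y : Finset Cell} :
    rotateD X ⊆ rotateD Y ↔ X ⊆ Y :=
  ⟨fun h x hx => by simpa using h (show -x ∈ rotateD X by simpa),
    fun h x hx => mem_rotateD.2 (h (mem_rotateD.1 hx))⟩

@[simp] lemma rotateD_ssubset_rotateD_iff {X Y : Finset Cell} :
    rotateD X ⊂ rotateD Y ↔ X ⊂ Y := by
  simp [ssubset_iff_subset_not_subset]

lemma rotateD_union (X Y : Finset Cell) : rotateD (X ∪ Y) = rotateD X ∪ rotateD Y := by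
  ext x; simp

lemma rotateD_sdiff (X Y : Finset Cell) : rotateD (X \ Y) = rotateD X \ rotateD Y := by
  ext x; simp

lemma rotateD_biUnion (s : Finset Cell) (t : Cell → Finset Cell) :
    rotateD (s.biUnion t) = s.biUnion (fun a => rotateD (t a)) :=
  Finset.biUnion_image

lemma CellAdj.neg {a b : Cell} (h : CellAdj a b) : CellAdj (-a) (-b) := by
  unfold CellAdj at *; simp only [Prod.fst_neg, Prod.snd_neg]; omega

lemma CellAdj.content_eq {a b : Cell} (h : CellAdj a b) :
    b.2 - b.1 = a.2 - a.1 + 1 ∨ b.2 - b.1 = a.2 - a.1 - 1 := by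
  unfold CellAdj at h; omega

end Plane

section Corners

def IsSWCell (X : Finset Cell) (c : Cell) : Prop :=
  c ∈ X ∧ ∀ c' ∈ X, c'.1 ≤ c.1 ∧ (c'.1 = c.1 → c.2 ≤ c'.2)

def IsNECell (X : Finset Cell) (c : Cell) : Prop :=
  c ∈ X ∧ ∀ c' ∈ X, c.1 ≤ c'.1 ∧ (c'.1 = c.1 → c'.2 ≤ c.2)

lemma IsSWCell.unique {X : Finset Cell} {c c' : Cell} (h : IsSWCell X c) (h' : IsSWCell X c') :
    c = c' := by
  have := h.2 c' h'.1; have := h'.2 c h.1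
  exact Prod.ext (by omega) (by omega)

lemma IsNECell.neg {X : Finset Cell} {c : Cell} (h : IsNECell X c) :
    IsSWCell (rotateD X) (-c) :=
  ⟨by simpa using h.1, fun c' hc' => by
    have := h.2 _ (mem_rotateD.1 hc'); simp only [Prod.fst_neg, Prod.snd_neg] at *; omega⟩

lemma IsSWCell.translate {X : Finset Cell} {c : Cell} (h : IsSWCell X c) (v : Cell) :
    IsSWCell (translateD v X) (c + v) :=
  ⟨by simpa using h.1, fun c' hc' => by
    have := h.2 _ (mem_translateD.1 hc')
    simp only [Prod.fst_add, Prod.snd_add, Prod.fst_sub, Prod.snd_sub] at *; omega⟩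

lemma swCell_isSWCell {X : Finset Cell} (h : X.Nonempty) : IsSWCell X (swCell X) := by
  obtain ⟨i, hi⟩ := Finset.max_of_nonempty (h.image Prod.fst)
  obtain ⟨c₀, hc₀, rfl⟩ := Finset.mem_image.1 (Finset.mem_of_max hi)
  have hrow : (X.filter (·.1 = c₀.1)).Nonempty :=
    ⟨c₀, Finset.mem_filter.2 ⟨hc₀, rfl⟩⟩
  obtain ⟨j, hj⟩ := Finset.min_of_nonempty (hrow.image Prod.snd)
  obtain ⟨c, hc, rfl⟩ := Finset.mem_image.1 (Finset.mem_of_min hj)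
  have hsw : swCell X = (c₀.1, c.2) := by simp [swCell, hi, hj]
  rw [hsw]
  refine ⟨?_, fun c' hc' => ⟨Finset.le_max_of_eq (Finset.mem_image_of_mem _ hc') hi,
    fun hc'₀ => Finset.min_le_of_eq
      (Finset.mem_image_of_mem _ (Finset.mem_filter.2 ⟨hc', hc'₀⟩)) hj⟩⟩
  obtain ⟨hcX, hc₁⟩ := Finset.mem_filter.1 hc
  rwa [← hc₁]

lemma neCell_isNECell {X : Finset Cell} (h : X.Nonempty) : IsNECell X (neCell X) := by
  obtain ⟨i, hi⟩ := Finset.min_of_nonempty (h.image Prod.fst)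
  obtain ⟨c₀, hc₀, rfl⟩ := Finset.mem_image.1 (Finset.mem_of_min hi)
  have hrow : (X.filter (·.1 = c₀.1)).Nonempty :=
    ⟨c₀, Finset.mem_filter.2 ⟨hc₀, rfl⟩⟩
  obtain ⟨j, hj⟩ := Finset.max_of_nonempty (hrow.image Prod.snd)
  obtain ⟨c, hc, rfl⟩ := Finset.mem_image.1 (Finset.mem_of_max hj)
  have hne : neCell X = (c₀.1, c.2) := by simp [neCell, hi, hj]
  rw [hne]
  refine ⟨?_, fun c' hc' => ⟨Finset.min_le_of_eq (Finset.mem_image_of_mem _ hc') hi,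
    fun hc'₀ => Finset.le_max_of_eq
      (Finset.mem_image_of_mem _ (Finset.mem_filter.2 ⟨hc', hc'₀⟩)) hj⟩⟩
  obtain ⟨hcX, hc₁⟩ := Finset.mem_filter.1 hc
  rwa [← hc₁]

lemma IsSWCell.eq_swCell {X : Finset Cell} {c : Cell} (h : IsSWCell X c) : c = swCell X :=
  h.unique (swCell_isSWCell ⟨c, h.1⟩)

lemma swCell_mem {X : Finset Cell} (h : X.Nonempty) : swCell X ∈ X := (swCell_isSWCell h).1

lemma neCell_mem {X : Finset Cell} (h : X.Nonempty) : neCell X ∈ X := (neCell_isNECell h).1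

lemma swCell_rotateD (X : Finset Cell) : swCell (rotateD X) = -neCell X := by
  rcases X.eq_empty_or_nonempty with rfl | h
  · rfl
  · exact (neCell_isNECell h).neg.eq_swCell.symm

lemma neCell_rotateD (X : Finset Cell) : neCell (rotateD X) = -swCell X := by
  rw [← neg_neg (neCell _), ← swCell_rotateD, rotateD_rotateD]

lemma swCell_translateD {X : Finset Cell} (h : X.Nonempty) (v : Cell) :
    swCell (translateD v X) = swCell X + v :=
  ((swCell_isSWCell h).translate v).eq_swCell.symm

lemma neCell_translateD {X : Finset Cell} (h : X.Nonempty) (v : Cell) :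
    neCell (translateD v X) = neCell X + v := by
  have := swCell_translateD (rotateD_nonempty_iff.2 h) (-v)
  rw [← rotateD_translateD, swCell_rotateD, swCell_rotateD] at this
  simpa [neg_add_rev, add_comm] using congrArg Neg.neg this

end Corners

section SkewDiagrams

lemma List.getD_le_foldr_max (l : List ℕ) (n : ℕ) : l.getD n 0 ≤ l.foldr max 0 := by
  rcases lt_or_ge n l.length with hn | hn
  · rw [List.getD_eq_getElem _ _ hn]
    exact List.le_max_of_le' 0 (List.getElem_mem hn) le_rfl
  · rw [List.getD_eq_default _ _ hn]; exact Nat.zero_le _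

lemma IsPartitionList.getD_antitone {l : List ℕ} (hl : IsPartitionList l) :
    Antitone (fun n => l.getD n 0) := by
  intro a b hab
  dsimp only
  rcases lt_or_ge b l.length with hb | hb
  · rw [List.getD_eq_getElem _ _ hb, List.getD_eq_getElem _ _ (lt_of_le_of_lt hab hb)]
    rcases eq_or_lt_of_le hab with rfl | hab
    · exact le_rfl
    · exact List.pairwise_iff_getElem.mp hl.1 a b _ _ hab
  · rw [List.getD_eq_default _ _ hb]; exact Nat.zero_le _

lemma mem_skewCells {lam mu : List ℕ} {c : Cell} :
    c ∈ skewCells lam mu ↔ 1 ≤ c.1 ∧ c.1 ≤ lam.length ∧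
      (mu.getD (c.1 - 1).toNat 0 : ℤ) < c.2 ∧ c.2 ≤ lam.getD (c.1 - 1).toNat 0 := by
  have := lam.getD_le_foldr_max (c.1 - 1).toNat
  simp only [skewCells, Finset.mem_filter, Finset.mem_product, Finset.mem_Icc]
  omega

lemma IsSkewDiagram.translate {S : Finset Cell} (h : IsSkewDiagram S) (v : Cell) :
    IsSkewDiagram (translateD v S) := by
  obtain ⟨lam, mu, w, hlam, hmu, hle, rfl⟩ := h
  exact ⟨lam, mu, v + w, hlam, hmu, hle, translateD_translateD v w _⟩

lemma IsSkewDiagram.ordConnected {S : Finset Cell} (h : IsSkewDiagram S) :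
    (S : Set Cell).OrdConnected := by
  obtain ⟨lam, mu, v, hlam, hmu, -, rfl⟩ := h
  refine ⟨fun a ha b hb c ⟨⟨hac₁, hac₂⟩, ⟨hcb₁, hcb₂⟩⟩ => ?_⟩
  simp only [Finset.mem_coe, mem_translateD, mem_skewCells, Prod.fst_sub, Prod.snd_sub]
    at ha hb ⊢
  have hlam' := hlam.getD_antitone
    (show (c.1 - v.1 - 1).toNat ≤ (b.1 - v.1 - 1).toNat by omega)
  have hmu' := hmu.getD_antitone
    (show (a.1 - v.1 - 1).toNat ≤ (c.1 - v.1 - 1).toNat by omega)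
  simp only at hlam' hmu'
  omega

end SkewDiagrams

section RotationOfSkewDiagrams

lemma List.getD_takeWhile_pos {l : List ℕ} (hl : l.Pairwise (· ≥ ·)) (k : ℕ) :
    (l.takeWhile (fun x => 0 < x)).getD k 0 = l.getD k 0 := by
  induction l generalizing k with
  | nil => simp
  | cons a t ih =>
    rcases Nat.eq_zero_or_pos a with rfl | ha
    · have h0 : ∀ x ∈ 0 :: t, x = 0 := fun x hx =>
        (List.mem_cons.1 hx).elim id fun hx => Nat.le_zero.1 ((List.pairwise_cons.1 hl).1 x hx)
      rw [List.takeWhile_cons_of_neg (by simp)]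
      rcases lt_or_ge k (0 :: t).length with hk | hk
      · rw [List.getD_eq_getElem _ _ hk, h0 _ (List.getElem_mem hk)]; simp
      · rw [List.getD_eq_default _ _ hk]; simp
    · rw [List.takeWhile_cons_of_pos (by simpa using ha)]
      cases k with
      | zero => simp
      | succ k => simpa using ih (List.pairwise_cons.1 hl).2 k

lemma List.lt_length_takeWhile_pos_iff {l : List ℕ} (hl : l.Pairwise (· ≥ ·)) (k : ℕ) :
    k < (l.takeWhile (fun x => 0 < x)).length ↔ 0 < l.getD k 0 := by
  rw [← List.getD_takeWhile_pos hl]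
  constructor
  · intro hk
    rw [List.getD_eq_getElem _ _ hk]
    simpa using List.mem_takeWhile_imp (List.getElem_mem hk)
  · intro h
    by_contra hk
    rw [List.getD_eq_default _ _ (not_lt.1 hk)] at h
    exact lt_irrefl 0 h

def partitionOf (f : ℕ → ℕ) (n : ℕ) : List ℕ :=
  ((List.range n).map f).takeWhile (fun x => 0 < x)

lemma pairwise_map_range_of_antitone {f : ℕ → ℕ} (hf : Antitone f) (n : ℕ) :
    ((List.range n).map f).Pairwise (· ≥ ·) :=
  List.pairwise_map.2 ((List.pairwise_lt_range (n := n)).imp fun hab => hf hab.le)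

lemma isPartitionList_partitionOf {f : ℕ → ℕ} (hf : Antitone f) (n : ℕ) :
    IsPartitionList (partitionOf f n) :=
  ⟨(pairwise_map_range_of_antitone hf n).sublist (List.takeWhile_sublist _),
    fun x hx => by simpa using List.mem_takeWhile_imp hx⟩

lemma getD_partitionOf {f : ℕ → ℕ} (hf : Antitone f) (n k : ℕ) :
    (partitionOf f n).getD k 0 = if k < n then f k else 0 := by
  rw [partitionOf, List.getD_takeWhile_pos (pairwise_map_range_of_antitone hf n)]
  split_ifs with hk
  · rw [List.getD_eq_getElem _ _ (by simpa using hk)]; simp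
  · exact List.getD_eq_default _ _ (by simpa using hk)

lemma lt_length_partitionOf_iff {f : ℕ → ℕ} (hf : Antitone f) (n k : ℕ) :
    k < (partitionOf f n).length ↔ k < n ∧ 0 < f k := by
  have h := getD_partitionOf hf n k
  rw [partitionOf, List.getD_takeWhile_pos (pairwise_map_range_of_antitone hf n)] at h
  rw [partitionOf, List.lt_length_takeWhile_pos_iff (pairwise_map_range_of_antitone hf n), h]
  split_ifs with hk <;> simp [hk]

lemma isSkewDiagram_of_rowBounds {S : Finset Cell} {n : ℕ} {f g : ℕ → ℕ}
    (hf : Antitone f) (hg : Antitone g) (hgf : g ≤ f)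
    (hS : ∀ c : Cell, c ∈ S ↔ 1 ≤ c.1 ∧ c.1 ≤ n ∧
      (g (c.1 - 1).toNat : ℤ) < c.2 ∧ c.2 ≤ f (c.1 - 1).toNat) :
    IsSkewDiagram S := by
  refine ⟨partitionOf f n, partitionOf g n, 0, isPartitionList_partitionOf hf n,
    isPartitionList_partitionOf hg n, fun k => ?_, ?_⟩
  · rw [getD_partitionOf hf, getD_partitionOf hg]
    split_ifs
    exacts [hgf k, le_rfl]
  · ext c
    have hlen := lt_length_partitionOf_iff hf n (c.1 - 1).toNat
    rw [hS, mem_translateD, sub_zero, mem_skewCells, getD_partitionOf hf, getD_partitionOf hg]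
    split_ifs <;> omega

lemma IsSkewDiagram.rotate {S : Finset Cell} (h : IsSkewDiagram S) :
    IsSkewDiagram (rotateD S) := by
  obtain ⟨lam, mu, v, hlam, hmu, hle, rfl⟩ := h
  set ℓ := lam.length
  set M := lam.getD 0 0
  have hlamM (k : ℕ) : lam.getD k 0 ≤ M := hlam.getD_antitone (Nat.zero_le k)
  have hS := isSkewDiagram_of_rowBounds (S := translateD ((ℓ : ℤ) + 1, (M : ℤ) + 1)
      (rotateD (skewCells lam mu))) (n := ℓ)
    (f := fun k => M - mu.getD (ℓ - 1 - k) 0) (g := fun k => M - lam.getD (ℓ - 1 - k) 0)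
    (fun a b hab => Nat.sub_le_sub_left (hmu.getD_antitone (by omega)) M)
    (fun a b hab => Nat.sub_le_sub_left (hlam.getD_antitone (by omega)) M)
    (fun k => Nat.sub_le_sub_left (hle _) M) (fun c => ?_)
  · have := hS.translate (-v - ((ℓ : ℤ) + 1, (M : ℤ) + 1))
    rwa [translateD_translateD, sub_add_cancel, ← rotateD_translateD] at this
  · rw [mem_translateD, mem_rotateD, mem_skewCells]
    simp only [Prod.fst_neg, Prod.snd_neg, Prod.fst_sub, Prod.snd_sub]
    have hidx : 1 ≤ c.1 → c.1 ≤ ℓ →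
        (-(c.1 - (ℓ + 1)) - 1).toNat = ℓ - 1 - (c.1 - 1).toNat := by
      omega
    have := hlamM (ℓ - 1 - (c.1 - 1).toNat)
    have := hle (ℓ - 1 - (c.1 - 1).toNat)
    constructor
    · rintro ⟨h1, h2, h3, h4⟩
      rw [hidx (by omega) (by omega)] at h3 h4
      omega
    · rintro ⟨h1, h2, h3, h4⟩
      rw [hidx h1 h2]
      omega

end RotationOfSkewDiagrams

section Connectivity

variable {F : Finset Cell}

lemma IsConnectedDiagram.rotate (h : IsConnectedDiagram F) : IsConnectedDiagram (rotateD F) := by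
  refine ⟨rotateD_nonempty_iff.2 h.1, fun c hc c' hc' => ?_⟩
  have := Relation.ReflTransGen.lift (p := fun x y => y ∈ rotateD F ∧ CellAdj x y) Neg.neg
    (fun a b hab => ⟨by simpa using hab.1, hab.2.neg⟩) _ _
    (h.2 _ (mem_rotateD.1 hc) _ (mem_rotateD.1 hc'))
  simpa [Function.onFun] using this

lemma Relation.ReflTransGen.exists_step_not {α : Type*} {r : α → α → Prop} {P : α → Prop}
    {a c : α} (h : Relation.ReflTransGen r a c) (ha : P a) (hc : ¬ P c) :
    ∃ x y, Relation.ReflTransGen r a x ∧ r x y ∧ P x ∧ ¬ P y := by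
  induction h with
  | refl => exact absurd ha hc
  | @tail b c hab hbc ih =>
    by_cases hb : P b
    · exact ⟨b, c, hab, hbc, hb, hc⟩
    · exact ih hb

lemma IsConnectedDiagram.exists_adj_not (hF : IsConnectedDiagram F) {a c : Cell}
    (ha : a ∈ F) (hc : c ∈ F) {P : Cell → Prop} (hPa : P a) (hPc : ¬ P c) :
    ∃ x ∈ F, ∃ y ∈ F, CellAdj x y ∧ P x ∧ ¬ P y := by
  obtain ⟨x, y, hax, ⟨hy, hxy⟩, hx, hy'⟩ := (hF.2 a ha c hc).exists_step_not hPa hPc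
  have hxF : x ∈ F := by
    rcases hax.cases_tail with rfl | ⟨_, _, hx, _⟩
    exacts [ha, hx]
  exact ⟨x, hxF, y, hy, hxy, hx, hy'⟩

lemma IsConnectedDiagram.exists_content_eq (hF : IsConnectedDiagram F) {a c : Cell}
    (ha : a ∈ F) (hc : c ∈ F) {t : ℤ} (hat : a.2 - a.1 ≤ t) (htc : t ≤ c.2 - c.1) :
    ∃ z ∈ F, z.2 - z.1 = t := by
  rcases hat.eq_or_lt with hat | hat
  · exact ⟨a, ha, hat⟩
  obtain ⟨x, -, y, hy, hxy, hx, hy'⟩ :=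
    hF.exists_adj_not ha hc (P := fun z => z.2 - z.1 < t) hat (not_lt.2 htc)
  exact ⟨y, hy, by have := hxy.content_eq; omega⟩

end Connectivity

section SkewCorners

variable {S : Finset Cell}

lemma IsSkewDiagram.mem_of_le_of_le (h : IsSkewDiagram S) {a b c : Cell} (ha : a ∈ S)
    (hb : b ∈ S) (hac : a ≤ c) (hcb : c ≤ b) : c ∈ S :=
  h.ordConnected.out ha hb ⟨hac, hcb⟩

lemma IsSkewDiagram.content_le_of_isNECell (h : IsSkewDiagram S) {q : Cell}
    (hq : IsNECell S q) {c : Cell} (hc : c ∈ S) : c.2 - c.1 ≤ q.2 - q.1 := by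
  have hrow := (hq.2 c hc).1
  have hcol : c.2 ≤ q.2 := by
    by_contra! hcq
    have := (hq.2 _ (h.mem_of_le_of_le hq.1 hc (c := (q.1, q.2 + 1))
      ⟨le_rfl, by simp⟩ ⟨hrow, by simp only; omega⟩)).2 rfl
    simp at this
  omega

lemma IsSkewDiagram.isSWCell_of_not_mem (hS : IsSkewDiagram S) (hconn : IsConnectedDiagram S)
    {o : Cell} (ho : o ∈ S) (hw : ((o.1, o.2 - 1) : Cell) ∉ S)
    (hs : ((o.1 + 1, o.2) : Cell) ∉ S) : IsSWCell S o := by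
  have hleft {c : Cell} (hc : c ∈ S) (hco : c.1 = o.1) : o.2 ≤ c.2 := by
    by_contra! hlt
    exact hw (hS.mem_of_le_of_le hc ho ⟨hco.le, by simp only; omega⟩ ⟨le_rfl, by simp⟩)
  have hcut {x : Cell} (hx : x ∈ S) (hxo : x.1 = o.1) : ((x.1 + 1, x.2) : Cell) ∉ S := fun hy =>
    hs (hS.mem_of_le_of_le ho hy ⟨by simp, le_rfl⟩ ⟨by simp [hxo], hleft (c := x) hx hxo⟩)
  have hbelow {c : Cell} (hc : c ∈ S) : c.1 ≤ o.1 := by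
    by_contra! hco
    obtain ⟨x, hx, y, hy, hxy, hxo, hyo⟩ :=
      hconn.exists_adj_not ho hc (P := fun z => z.1 ≤ o.1) le_rfl hco.not_ge
    simp only [not_le] at hxo hyo
    unfold CellAdj at hxy
    have hyx : y = (x.1 + 1, x.2) := by ext <;> simp only <;> omega
    exact hcut hx (by omega) (hyx ▸ hy)
  exact ⟨ho, fun c hc => ⟨hbelow hc, hleft hc⟩⟩

end SkewCorners

section Copies

variable {E W : Finset Cell}

lemma isSkewDiagram_empty : IsSkewDiagram ∅ :=
  isSkewDiagram_of_rowBounds (n := 0) (f := 0) (g := 0) antitone_const antitone_const le_rfl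
    (by simp)

lemma isSkewDiagram_rotateD_iff {S : Finset Cell} :
    IsSkewDiagram (rotateD S) ↔ IsSkewDiagram S :=
  ⟨fun h => by simpa using h.rotate, IsSkewDiagram.rotate⟩

lemma isConnectedDiagram_rotateD_iff {S : Finset Cell} :
    IsConnectedDiagram (rotateD S) ↔ IsConnectedDiagram S :=
  ⟨fun h => by simpa using h.rotate, IsConnectedDiagram.rotate⟩

@[simp] lemma WneCopy_empty (E : Finset Cell) : WneCopy ∅ E = ∅ := by simp [WneCopy]

@[simp] lemma WswCopy_empty (E : Finset Cell) : WswCopy ∅ E = ∅ := by simp [WswCopy]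

lemma WneCopy_rotateD (W E : Finset Cell) :
    WneCopy (rotateD W) (rotateD E) = rotateD (WswCopy W E) := by
  rw [WneCopy, WswCopy, rotateD_translateD, neCell_rotateD, neCell_rotateD, neg_sub_neg,
    neg_sub]

lemma WswCopy_rotateD (W E : Finset Cell) :
    WswCopy (rotateD W) (rotateD E) = rotateD (WneCopy W E) := by
  rw [WneCopy, WswCopy, rotateD_translateD, swCell_rotateD, swCell_rotateD, neg_sub_neg,
    neg_sub]

lemma Odiag_rotateD (E W : Finset Cell) :
    Odiag (rotateD E) (rotateD W) = rotateD (Odiag E W) := by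
  rw [Odiag, Odiag, WneCopy_rotateD, WswCopy_rotateD, rotateD_sdiff, rotateD_union,
    Finset.union_comm]

lemma WneCopy_eq_translateD_WswCopy (W E : Finset Cell) :
    WneCopy W E = translateD ((neCell E - neCell W) - (swCell E - swCell W)) (WswCopy W E) := by
  rw [WneCopy, WswCopy, translateD_translateD, sub_add_cancel]

lemma amalgShift_rotateD (E W : Finset Cell) :
    amalgShift (rotateD E) (rotateD W) = amalgShift E W := by
  unfold amalgShift
  simp only [rotateD_eq_empty_iff, neCell_rotateD, swCell_rotateD]
  split_ifs <;> ext <;> simp <;> ring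

lemma swCell_mem_WswCopy (E : Finset Cell) (hW : W.Nonempty) : swCell E ∈ WswCopy W E := by
  simpa [WswCopy] using swCell_mem hW

lemma neCell_mem_WneCopy (E : Finset Cell) (hW : W.Nonempty) : neCell E ∈ WneCopy W E := by
  simpa [WneCopy] using neCell_mem hW

lemma LiesInBottom.isSkewDiagram (h : LiesInBottom W E) : IsSkewDiagram W := by
  rcases h with rfl | ⟨hW, -⟩
  exacts [isSkewDiagram_empty, hW]

lemma liesInTop_rotateD_iff : LiesInTop (rotateD W) (rotateD E) ↔ LiesInBottom W E := by
  simp only [LiesInTop, LiesInBottom, rotateD_eq_empty_iff, isSkewDiagram_rotateD_iff,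
    isConnectedDiagram_rotateD_iff, WneCopy_rotateD, rotateD_subset_rotateD_iff]

lemma liesInBottom_rotateD_iff : LiesInBottom (rotateD W) (rotateD E) ↔ LiesInTop W E := by
  simp only [LiesInTop, LiesInBottom, rotateD_eq_empty_iff, isSkewDiagram_rotateD_iff,
    isConnectedDiagram_rotateD_iff, WswCopy_rotateD, rotateD_subset_rotateD_iff]

lemma IsWOW.rotate (h : IsWOW E W) : IsWOW (rotateD E) (rotateD W) := by
  obtain ⟨hE, hEconn, htop, hbot⟩ := h
  exact ⟨hE.rotate, hEconn.rotate, liesInTop_rotateD_iff.2 hbot,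
    liesInBottom_rotateD_iff.2 htop⟩

lemma HypII.rotate (h : HypII E W) : HypII (rotateD E) (rotateD W) := by
  obtain ⟨t, hsw, hne⟩ := h
  refine ⟨-t, fun x hx => ?_, fun x hx => ?_⟩
  · rw [WswCopy_rotateD, mem_rotateD] at hx
    have := hne _ hx; simp only [Prod.fst_neg, Prod.snd_neg] at this; omega
  · rw [WneCopy_rotateD, mem_rotateD] at hx
    have := hsw _ hx; simp only [Prod.fst_neg, Prod.snd_neg] at this; omega

lemma HypIII.rotate (h : HypIII E W) : HypIII (rotateD E) (rotateD W) := by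
  obtain ⟨h1, h2, h3, h4⟩ := h
  simp only [HypIII, WneCopy_rotateD, WswCopy_rotateD, ← rotateD_sdiff,
    isSkewDiagram_rotateD_iff, isConnectedDiagram_rotateD_iff]
  exact ⟨h3, h4, h1, h2⟩

end Copies

section Attachment

variable {E W : Finset Cell}

lemma lowerHoriz_rotateD_iff : LowerHoriz (rotateD E) (rotateD W) ↔ UpperHoriz E W := by
  rw [LowerHoriz, UpperHoriz, Odiag_rotateD, WswCopy_rotateD, swCell_rotateD, mem_rotateD]
  simp [add_comm]

lemma lowerVert_rotateD_iff : LowerVert (rotateD E) (rotateD W) ↔ UpperVert E W := by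
  rw [LowerVert, UpperVert, Odiag_rotateD, WswCopy_rotateD, swCell_rotateD, mem_rotateD]
  simp [neg_add_eq_sub]

lemma upperHoriz_rotateD_iff : UpperHoriz (rotateD E) (rotateD W) ↔ LowerHoriz E W := by
  rw [← lowerHoriz_rotateD_iff, rotateD_rotateD, rotateD_rotateD]

lemma upperVert_rotateD_iff : UpperVert (rotateD E) (rotateD W) ↔ LowerVert E W := by
  rw [← lowerVert_rotateD_iff, rotateD_rotateD, rotateD_rotateD]

lemma caseA_rotateD_iff : CaseA (rotateD E) (rotateD W) ↔ CaseA E W := by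
  rw [CaseA, CaseA, rotateD_eq_empty_iff, lowerHoriz_rotateD_iff, upperHoriz_rotateD_iff,
    and_comm]

lemma caseB_rotateD_iff : CaseB (rotateD E) (rotateD W) ↔ CaseB E W := by
  rw [CaseB, CaseB, Ne, rotateD_eq_empty_iff, lowerVert_rotateD_iff, upperVert_rotateD_iff,
    and_comm (a := UpperVert E W)]

lemma caseC_rotateD_iff : CaseC (rotateD E) (rotateD W) ↔ CaseD E W := by
  rw [CaseC, CaseD, Ne, rotateD_eq_empty_iff, lowerHoriz_rotateD_iff, upperVert_rotateD_iff,
    and_comm (a := UpperHoriz E W)]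

lemma caseD_rotateD_iff : CaseD (rotateD E) (rotateD W) ↔ CaseC E W := by
  rw [← caseC_rotateD_iff, rotateD_rotateD, rotateD_rotateD]

lemma IsWOW.WswCopy_subset (h : IsWOW E W) : WswCopy W E ⊆ E := by
  rcases h.2.2.2 with rfl | ⟨-, -, hsub⟩
  exacts [by simp, hsub]

lemma IsWOW.WneCopy_subset (h : IsWOW E W) : WneCopy W E ⊆ E := by
  rcases h.2.2.1 with rfl | ⟨-, -, hsub⟩
  exacts [by simp, hsub]

lemma HypII.disjoint (h : HypII E W) : Disjoint (WswCopy W E) (WneCopy W E) := by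
  obtain ⟨t, hsw, hne⟩ := h
  exact Finset.disjoint_left.2 fun x hx hx' => by have := hsw x hx; have := hne x hx'; omega

lemma Odiag_nonempty (hWOW : IsWOW E W) (h2 : HypII E W) (hW : W.Nonempty) :
    (Odiag E W).Nonempty := by
  obtain ⟨t, hsw, hne⟩ := h2
  have hsw' := hsw _ (swCell_mem_WswCopy E hW)
  have hne' := hne _ (neCell_mem_WneCopy E hW)
  obtain ⟨z, hz, hzt⟩ := hWOW.2.1.exists_content_eq
    (hWOW.WswCopy_subset (swCell_mem_WswCopy E hW))
    (hWOW.WneCopy_subset (neCell_mem_WneCopy E hW)) hsw'.le hne'.le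
  refine ⟨z, Finset.mem_sdiff.2 ⟨hz, fun hzW => ?_⟩⟩
  rcases Finset.mem_union.1 hzW with hzW | hzW
  · have := hne z hzW; omega
  · have := hsw z hzW; omega

lemma not_lowerHoriz_and_lowerVert (hWOW : IsWOW E W) (h2 : HypII E W) :
    ¬ (LowerHoriz E W ∧ LowerVert E W) := by
  rintro ⟨hH, hV⟩
  rcases W.eq_empty_or_nonempty with rfl | hW
  · simp [LowerHoriz] at hH
  have ho := swCell_mem (Odiag_nonempty hWOW h2 hW)
  have hWsw : IsSkewDiagram (WswCopy W E) := hWOW.2.2.2.isSkewDiagram.translate _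
  exact (Finset.mem_sdiff.1 ho).2 (Finset.mem_union_right _
    (hWsw.mem_of_le_of_le hH hV ⟨le_rfl, by simp⟩ ⟨by simp, le_rfl⟩))

lemma not_upperHoriz_and_upperVert (hWOW : IsWOW E W) (h2 : HypII E W) :
    ¬ (UpperHoriz E W ∧ UpperVert E W) := by
  rw [← lowerHoriz_rotateD_iff, ← lowerVert_rotateD_iff]
  exact not_lowerHoriz_and_lowerVert hWOW.rotate h2.rotate

lemma lowerHoriz_or_lowerVert (hWOW : IsWOW E W) (h2 : HypII E W) (h3 : HypIII E W)
    (hW : W.Nonempty) : LowerHoriz E W ∨ LowerVert E W := by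
  have hO := swCell_isSWCell (Odiag_nonempty hWOW h2 hW)
  set o := swCell (Odiag E W)
  have hoO := Finset.mem_sdiff.1 hO.1
  have hO_of {x : Cell} (hx : x ∈ E \ WneCopy W E) (hxW : x ∉ WswCopy W E) :
      x ∈ Odiag E W := by
    simp_all [Odiag]
  by_contra! hno
  have hwest : ((o.1, o.2 - 1) : Cell) ∉ E \ WneCopy W E := fun hx => by
    have := (hO.2 _ (hO_of hx hno.1)).2 rfl
    simp at this
  have hsouth : ((o.1 + 1, o.2) : Cell) ∉ E \ WneCopy W E := fun hx => by
    have := (hO.2 _ (hO_of hx hno.2)).1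
    simp at this
  have hswE : IsSWCell (E \ WneCopy W E) (swCell E) :=
    ⟨Finset.mem_sdiff.2 ⟨hWOW.WswCopy_subset (swCell_mem_WswCopy E hW),
        Finset.disjoint_left.1 h2.disjoint (swCell_mem_WswCopy E hW)⟩,
      fun c hc => (swCell_isSWCell hWOW.2.1.1).2 c (Finset.sdiff_subset hc)⟩
  have ho : o ∈ E \ WneCopy W E :=
    Finset.mem_sdiff.2 ⟨hoO.1, fun h => hoO.2 (Finset.mem_union_left _ h)⟩
  have hoE : o = swCell E := (h3.1.isSWCell_of_not_mem h3.2.1 ho hwest hsouth).unique hswE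
  exact hoO.2 (Finset.mem_union_right _ (hoE ▸ swCell_mem_WswCopy E hW))

lemma upperHoriz_or_upperVert (hWOW : IsWOW E W) (h2 : HypII E W) (h3 : HypIII E W)
    (hW : W.Nonempty) : UpperHoriz E W ∨ UpperVert E W := by
  rw [← lowerHoriz_rotateD_iff, ← lowerVert_rotateD_iff]
  exact lowerHoriz_or_lowerVert hWOW.rotate h2.rotate h3.rotate (rotateD_nonempty_iff.2 hW)

structure IsUniquelyAttached (E W : Finset Cell) : Prop where
  not_lower : ¬ (LowerHoriz E W ∧ LowerVert E W)
  not_upper : ¬ (UpperHoriz E W ∧ UpperVert E W)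
  cases : CaseA E W ∨ CaseB E W ∨ CaseC E W ∨ CaseD E W

lemma IsWOW.isUniquelyAttached (hWOW : IsWOW E W) (h2 : HypII E W) (h3 : HypIII E W) :
    IsUniquelyAttached E W := by
  refine ⟨not_lowerHoriz_and_lowerVert hWOW h2, not_upperHoriz_and_upperVert hWOW h2, ?_⟩
  rcases W.eq_empty_or_nonempty with rfl | hW
  · exact Or.inl (Or.inl rfl)
  have hW' := hW.ne_empty
  rcases lowerHoriz_or_lowerVert hWOW h2 h3 hW with hL | hL <;>
    rcases upperHoriz_or_upperVert hWOW h2 h3 hW with hU | hU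
  exacts [Or.inl (Or.inr ⟨hL, hU⟩), Or.inr (Or.inr (Or.inl ⟨hW', hL, hU⟩)),
    Or.inr (Or.inr (Or.inr ⟨hW', hL, hU⟩)), Or.inr (Or.inl ⟨hW', hL, hU⟩)]

lemma IsUniquelyAttached.rotate (h : IsUniquelyAttached E W) :
    IsUniquelyAttached (rotateD E) (rotateD W) := by
  refine ⟨?_, ?_, ?_⟩
  · rw [lowerHoriz_rotateD_iff, lowerVert_rotateD_iff]; exact h.not_upper
  · rw [upperHoriz_rotateD_iff, upperVert_rotateD_iff]; exact h.not_lower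
  · rw [caseA_rotateD_iff, caseB_rotateD_iff, caseC_rotateD_iff, caseD_rotateD_iff]
    have := h.cases
    tauto

lemma IsUniquelyAttached.not_caseC_and_caseD (h : IsUniquelyAttached E W) :
    ¬ (CaseC E W ∧ CaseD E W) :=
  fun ⟨hC, hD⟩ => h.not_lower ⟨hC.2.1, hD.2.1⟩

lemma IsUniquelyAttached.of_caseC (h : IsUniquelyAttached E W) (hC : CaseC E W) :
    ¬ CaseA E W ∧ ¬ CaseB E W ∧ ¬ CaseD E W := by
  refine ⟨?_, fun hB => h.not_lower ⟨hC.2.1, hB.2.1⟩,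
    fun hD => h.not_caseC_and_caseD ⟨hC, hD⟩⟩
  rintro (hW | ⟨-, hU⟩)
  exacts [hC.1 hW, h.not_upper ⟨hU, hC.2.2⟩]

end Attachment

section MaximalityOfW

lemma image_content_rotateD (S : Finset Cell) :
    (rotateD S).image (fun c => c.2 - c.1) = (S.image fun c => c.2 - c.1).image Neg.neg := by
  rw [rotateD_eq_image_neg, Finset.image_image, Finset.image_image]
  congr 1
  funext c
  simp only [Function.comp, Prod.fst_neg, Prod.snd_neg]
  ring

lemma image_content_translateD (v : Cell) (S : Finset Cell) :
    (translateD v S).image (fun c => c.2 - c.1) =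
      (S.image fun c => c.2 - c.1).image (· + (v.2 - v.1)) := by
  rw [translateD, Finset.image_image, Finset.image_image]
  congr 1
  funext c
  simp only [Function.comp, Prod.fst_add, Prod.snd_add]
  ring

lemma IsSkewDiagram.isGreatest_content_neCell {S : Finset Cell} (h : IsSkewDiagram S)
    (hS : S.Nonempty) :
    IsGreatest (S.image fun c => c.2 - c.1 : Set ℤ) ((neCell S).2 - (neCell S).1) :=
  ⟨Finset.mem_coe.2 (Finset.mem_image_of_mem _ (neCell_mem hS)), fun t ht => by
    obtain ⟨c, hc, rfl⟩ := Finset.mem_image.1 (Finset.mem_coe.1 ht)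
    exact h.content_le_of_isNECell (neCell_isNECell hS) hc⟩

/-- The northeasternmost cell of a skew diagram lies on its highest diagonal, so the diagonals
of its bottom copy in `E` determine the translation taking it to its top copy. -/
lemma image_content_WneCopy_eq {X Y E : Finset Cell} (hX : IsSkewDiagram X)
    (hY : IsSkewDiagram Y)
    (h : (WswCopy X E).image (fun c => c.2 - c.1) = (WswCopy Y E).image (fun c => c.2 - c.1)) :
    (WneCopy X E).image (fun c => c.2 - c.1) = (WneCopy Y E).image (fun c => c.2 - c.1) := by
  rcases X.eq_empty_or_nonempty with rfl | hXn
  · rw [WswCopy_empty, Finset.image_empty, eq_comm, Finset.image_eq_empty, WswCopy,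
      translateD_eq_empty_iff] at h
    simp [h]
  have hX' : IsSkewDiagram (WswCopy X E) := hX.translate _
  have hY' : IsSkewDiagram (WswCopy Y E) := hY.translate _
  have hXn' : (WswCopy X E).Nonempty := translateD_nonempty_iff.2 hXn
  have hYn' : (WswCopy Y E).Nonempty := by
    rw [← Finset.image_nonempty (f := fun c : Cell => c.2 - c.1), ← h]; exact hXn'.image _
  have hYmax := hY'.isGreatest_content_neCell hYn'
  rw [← h] at hYmax
  have := (hX'.isGreatest_content_neCell hXn').unique hYmax
  simp only [WswCopy, neCell_translateD hXn, neCell_translateD (translateD_nonempty_iff.1 hYn')]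
    at this
  rw [WneCopy_eq_translateD_WswCopy X E, WneCopy_eq_translateD_WswCopy Y E,
    image_content_translateD, image_content_translateD, h]
  congr 1
  funext x
  simp only [Prod.fst_add, Prod.snd_add, Prod.fst_sub, Prod.snd_sub] at this ⊢
  omega

lemma HypI.rotate {E W : Finset Cell} (hW : IsSkewDiagram W) (h1 : HypI E W) :
    HypI (rotateD E) (rotateD W) := by
  rintro ⟨W', hW', htop, hbot, hne, hsw, hcont⟩
  rw [← rotateD_rotateD W'] at htop hbot hne hsw hcont
  rw [liesInTop_rotateD_iff] at htop
  rw [liesInBottom_rotateD_iff] at hbot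
  rw [WneCopy_rotateD, WneCopy_rotateD, rotateD_ssubset_rotateD_iff] at hne
  rw [WswCopy_rotateD, WswCopy_rotateD, rotateD_ssubset_rotateD_iff] at hsw
  rw [WneCopy_rotateD, WneCopy_rotateD, image_content_rotateD, image_content_rotateD] at hcont
  exact h1 ⟨rotateD W', hW'.rotate, hbot, htop, hsw, hne,
    image_content_WneCopy_eq hW'.rotate hW (Finset.image_injective neg_injective hcont)⟩

end MaximalityOfW

section Composition

variable {E W : Finset Cell}

lemma depthNW_rotateD (D : Finset Cell) (e : Cell) :
    depthNW (rotateD D) e = depthSE D (-e) := by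
  rw [depthNW, depthSE, rotateD_eq_image_neg, Finset.filter_image,
    Finset.card_image_of_injective _ neg_injective]
  congr 1
  ext c
  simp only [Finset.mem_filter, Prod.fst_neg, Prod.snd_neg]
  exact and_congr_right fun _ => by omega

lemma depthSE_rotateD (D : Finset Cell) (e : Cell) :
    depthSE (rotateD D) e = depthNW D (-e) := by
  have := depthNW_rotateD (rotateD D) (-e)
  rwa [rotateD_rotateD, neg_neg, eq_comm] at this

lemma IsUniquelyAttached.placeVec_rotateD (h : IsUniquelyAttached E W) (D : Finset Cell)
    (d : Cell) : placeVec (rotateD D) (rotateD E) (rotateD W) (-d) = -placeVec D E W d := by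
  have := h.cases
  have := h.not_caseC_and_caseD
  simp only [placeVec, amalgShift_rotateD, caseA_rotateD_iff, caseB_rotateD_iff,
    caseC_rotateD_iff, depthNW_rotateD, depthSE_rotateD, neg_neg]
  split_ifs <;> first | tauto | (ext <;> simp <;> ring)

lemma placeVec_north_of_caseC {D : Finset Cell} (hA : ¬ CaseA E W) (hB : ¬ CaseB E W)
    (hC : CaseC E W) {d : Cell} (hd : depthNW D (d.1 - 1, d.2) = depthNW D d) :
    placeVec D E W (d.1 - 1, d.2) = placeVec D E W d + amalgShift E W := by
  simp only [placeVec, if_neg hA, if_neg hB, if_pos hC, hd]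
  ext <;> simp <;> ring

lemma WneCopy_eq_translateD_amalgShift (hW : W ≠ ∅) :
    WneCopy W E = translateD (amalgShift E W) (WswCopy W E) := by
  rw [amalgShift, if_neg hW, WneCopy_eq_translateD_WswCopy]

/-- Vertical pairs of cells are indexed by their southern cell: rotation maps the pair with
southern cell `d` to the pair with southern cell `-(d.1 - 1, d.2)`, and exchanges ribbons of the
northwest decomposition with ribbons of the southeast decomposition. -/
lemma filter_verticalPairs_rotateD (D : Finset Cell) :
    (rotateD D).filter (fun e => ((e.1 - 1, e.2) : Cell) ∈ rotateD D ∧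
        depthSE (rotateD D) e = depthSE (rotateD D) (e.1 - 1, e.2)) =
      (D.filter fun d => ((d.1 - 1, d.2) : Cell) ∈ D ∧
        depthNW D d = depthNW D (d.1 - 1, d.2)).image fun d => -((d.1 - 1, d.2) : Cell) := by
  set φ : Cell → Cell := fun c => -((c.1 - 1, c.2) : Cell)
  have hφφ (c : Cell) : φ (φ c) = c := by ext <;> simp [φ]
  have hφ (c : Cell) : (((φ c).1 - 1, (φ c).2) : Cell) = -c := by ext <;> simp [φ]
  ext e
  conv_rhs => rw [← hφφ e, (Function.LeftInverse.injective hφφ).mem_finset_image]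
  simp only [Finset.mem_filter, hφ, mem_rotateD, depthSE_rotateD]
  constructor <;> exact fun ⟨h1, h2, h3⟩ => ⟨h2, h1, h3.symm⟩

lemma IsUniquelyAttached.extraWs_rotateD_of_caseC (h : IsUniquelyAttached E W)
    (hC : CaseC E W) (D : Finset Cell) :
    rotateD (extraWs D E W) = extraWs (rotateD D) (rotateD E) (rotateD W) := by
  obtain ⟨hA, hB, hD⟩ := h.of_caseC hC
  rw [extraWs, extraWs, if_pos hC, if_neg (caseC_rotateD_iff.not.2 hD),
    if_pos (caseD_rotateD_iff.2 hC), filter_verticalPairs_rotateD, Finset.image_biUnion,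
    rotateD_biUnion]
  refine Finset.biUnion_congr rfl fun d hd => ?_
  have hdep := (Finset.mem_filter.1 hd).2.2.symm
  rw [rotateD_translateD, ← WswCopy_rotateD,
    WneCopy_eq_translateD_amalgShift (rotateD_eq_empty_iff.not.2 hC.1), translateD_translateD,
    h.placeVec_rotateD, placeVec_north_of_caseC hA hB hC hdep, amalgShift_rotateD]
  congr 1
  abel

lemma IsUniquelyAttached.extraWs_rotateD (h : IsUniquelyAttached E W) (D : Finset Cell) :
    rotateD (extraWs D E W) = extraWs (rotateD D) (rotateD E) (rotateD W) := by
  by_cases hC : CaseC E W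
  · exact h.extraWs_rotateD_of_caseC hC D
  by_cases hD : CaseD E W
  · -- case (d) is case (c) for the rotated diagrams
    have := h.rotate.extraWs_rotateD_of_caseC (caseC_rotateD_iff.2 hD) (rotateD D)
    rw [rotateD_rotateD, rotateD_rotateD, rotateD_rotateD] at this
    rw [← this, rotateD_rotateD]
  · rw [extraWs, extraWs, if_neg hC, if_neg hD, if_neg (caseC_rotateD_iff.not.2 hD),
      if_neg (caseD_rotateD_iff.not.2 hC)]
    rfl

lemma IsUniquelyAttached.composeWE_rotateD (h : IsUniquelyAttached E W) (D : Finset Cell) :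
    rotateD (composeWE D E W) = composeWE (rotateD D) (rotateD E) (rotateD W) := by
  unfold composeWE
  by_cases hD : D = ∅
  · simp [hD]
  rw [if_neg hD, if_neg (rotateD_eq_empty_iff.not.2 hD), rotateD_union, h.extraWs_rotateD,
    rotateD_biUnion, rotateD_eq_image_neg D, Finset.image_biUnion]
  congr 1
  refine Finset.biUnion_congr rfl fun d _ => ?_
  rw [rotateD_translateD, ← rotateD_eq_image_neg, h.placeVec_rotateD]

end Composition

theorem composition_antipodal_rotation_general
    (D E W : Finset Cell)
    (hWOW : IsWOW E W)
    (h1 : HypI E W) (h2 : HypII E W) (h3 : HypIII E W) :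
    (∃ v : Cell, translateD v (rotateD (composeWE D E W)) =
        composeWE (rotateD D) (rotateD E) (rotateD W)) ∧
    IsWOW (rotateD E) (rotateD W) ∧
    (∃ v : Cell, translateD v (rotateD (Odiag E W)) = Odiag (rotateD E) (rotateD W)) ∧
    HypI (rotateD E) (rotateD W) ∧ HypII (rotateD E) (rotateD W) ∧
    HypIII (rotateD E) (rotateD W) := by
  refine ⟨⟨0, ?_⟩, hWOW.rotate, ⟨0, ?_⟩, h1.rotate hWOW.2.2.2.isSkewDiagram, h2.rotate,
    h3.rotate⟩
  · rw [translateD_zero, (hWOW.isUniquelyAttached h2 h3).composeWE_rotateD]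
  · rw [translateD_zero, Odiag_rotateD]

/-- For connected skew diagrams `D` and `E = WOW` satisfying Hypotheses (I)–(III),
one has `(D ∘_W E)^* = D^* ∘_{W^*} E^*` up to translation; moreover the antipodal
rotation `E^*` equals `W^*O^*W^*` (its `O` being the rotation of `O`, up to
translation) and again satisfies Hypotheses (I)–(III). -/
theorem composition_antipodal_rotation
    (D E W : Finset Cell)
    (hDskew : IsSkewDiagram D) (hDconn : IsConnectedDiagram D)
    (hWOW : IsWOW E W)
    (h1 : HypI E W) (h2 : HypII E W) (h3 : HypIII E W) :
    (∃ v : Cell, translateD v (rotateD (composeWE D E W)) =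
        composeWE (rotateD D) (rotateD E) (rotateD W)) ∧
    IsWOW (rotateD E) (rotateD W) ∧
    (∃ v : Cell, translateD v (rotateD (Odiag E W)) = Odiag (rotateD E) (rotateD W)) ∧
    HypI (rotateD E) (rotateD W) ∧ HypII (rotateD E) (rotateD W) ∧
    HypIII (rotateD E) (rotateD W) :=
  composition_antipodal_rotation_general D E W hWOW h1 h2 h3
end

section
/- Let λ/μ and σ/τ be skew diagrams with equal skew Schur functions. Then they have the same number of nonempty columns: the number of integers j such that (i,j) ∈ λ/μ for some i equals the number of integers j such that (i,j) ∈ σ/τ for some i. -/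
open scoped Classical

/-- A filling `T` of the cells of `D` with entries in `{1,…,n}` (represented by `Fin n`)
is a semistandard Young tableau if rows weakly increase west-to-east and columns
strictly increase north-to-south. -/
def IsSSYT (D : Finset Cell) {n : ℕ} (T : D → Fin n) : Prop :=
  (∀ c c' : D, (c' : Cell).1 = (c : Cell).1 → (c' : Cell).2 = (c : Cell).2 + 1 → T c ≤ T c') ∧
  (∀ c c' : D, (c' : Cell).1 = (c : Cell).1 + 1 → (c' : Cell).2 = (c : Cell).2 → T c < T c')

/-- The skew Schur polynomial of the diagram `D` in the variables x₁,…,x_n: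
the sum over all semistandard Young tableaux of shape `D` of the product of the
variables indexed by the entries. -/
noncomputable def skewSchurPoly (D : Finset Cell) (n : ℕ) : MvPolynomial (Fin n) ℤ :=
  ∑ T : D → Fin n, if IsSSYT D T then ∏ c : D, MvPolynomial.X (T c) else 0

/-- Two diagrams have equal skew Schur functions if their skew Schur polynomials agree
for every number n ≥ 1 of variables. -/
def SchurEq (D D' : Finset Cell) : Prop :=
  ∀ n : ℕ, 1 ≤ n → skewSchurPoly D n = skewSchurPoly D' n

/-! The degree of `x₁` (the variable `0 : Fin n`) in a skew Schur polynomial is the number of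
nonempty columns of the diagram, as soon as there are more variables than cells. Skew diagrams are
order-convex in `ℤ × ℤ`, so each column is an interval of rows and a semistandard tableau has at
most one entry `1` per column; conversely, filling every cell with one plus the number of cells
above it in its column gives a semistandard tableau with a `1` on top of every column. -/

open Finset MvPolynomial

section MonomialSum

variable {R σ ι : Type*} [CommSemiring R]

lemma coeff_sum_monomial_one (s : Finset ι) (f : ι → σ →₀ ℕ) (m : σ →₀ ℕ) :
    coeff m (∑ i ∈ s, monomial (f i) (1 : R)) = #{i ∈ s | f i = m} := by
  simp only [coeff_sum, coeff_monomial, sum_boole]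

lemma support_sum_monomial_one [CharZero R] (s : Finset ι) (f : ι → σ →₀ ℕ) :
    (∑ i ∈ s, monomial (f i) (1 : R)).support = s.image f := by
  ext m
  simp [mem_support_iff, coeff_sum_monomial_one]

lemma degreeOf_sum_monomial_one [CharZero R] (s : Finset ι) (f : ι → σ →₀ ℕ) (v : σ) :
    degreeOf v (∑ i ∈ s, monomial (f i) (1 : R)) = s.sup fun i => f i v := by
  rw [degreeOf_eq_sup, support_sum_monomial_one, sup_image]
  rfl

end MonomialSum

section Tableaux

variable {D : Finset Cell} {n : ℕ}

noncomputable def tableauContent (T : D → Fin n) : Fin n →₀ ℕ := ∑ c, Finsupp.single (T c) 1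

lemma tableauContent_apply (T : D → Fin n) (v : Fin n) : tableauContent T v = #{c | T c = v} := by
  simp [tableauContent, Finsupp.finsetSum_apply, Finsupp.single_apply, sum_boole]

lemma skewSchurPoly_eq_sum_monomial :
    skewSchurPoly D n = ∑ T : D → Fin n with IsSSYT D T, monomial (tableauContent T) 1 := by
  rw [skewSchurPoly, sum_filter]
  refine sum_congr rfl fun T _ => ?_
  rw [tableauContent, monomial_sum_one]
  rfl

lemma degreeOf_skewSchurPoly (v : Fin n) :
    degreeOf v (skewSchurPoly D n) =
      ({T | IsSSYT D T} : Finset (D → Fin n)).sup fun T => #{c | T c = v} := by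
  simp only [skewSchurPoly_eq_sum_monomial, degreeOf_sum_monomial_one, tableauContent_apply]

end Tableaux

section OrdConnected

variable {D : Finset Cell} {n : ℕ}

lemma IsSSYT.lt_of_fst_lt (hD : (D : Set Cell).OrdConnected) {T : D → Fin n} (hT : IsSSYT D T)
    {c c' : D} (hcol : (c' : Cell).2 = (c : Cell).2) (hrow : (c : Cell).1 < (c' : Cell).1) :
    T c < T c' := by
  obtain ⟨⟨i, j⟩, hc⟩ := c
  obtain ⟨⟨i', j'⟩, hc'⟩ := c'
  simp only at hcol hrow
  subst hcol
  induction i', Int.add_one_le_iff.2 hrow using Int.leInduction with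
  | base => exact hT.2 _ _ rfl rfl
  | succ k hik ih =>
    have hk : (k, j') ∈ D := hD.out hc hc' ⟨by simp; omega, by simp⟩
    exact (ih hk (by omega)).trans (hT.2 ⟨_, hk⟩ _ rfl rfl)

lemma IsSSYT.card_fiber_le (hD : (D : Set Cell).OrdConnected) {T : D → Fin n} (hT : IsSSYT D T)
    (v : Fin n) : #{c | T c = v} ≤ #(D.image Prod.snd) := by
  refine card_le_card_of_injOn (fun c => (c : Cell).2) (fun c _ => mem_image_of_mem _ c.2) ?_
  intro c hc c' hc' hcol
  simp only [coe_filter, mem_univ, true_and, Set.mem_ofPred_eq] at hc hc'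
  by_contra hne
  have hrow : (c : Cell).1 ≠ (c' : Cell).1 := fun h => hne (Subtype.ext (Prod.ext h hcol))
  rcases hrow.lt_or_gt with h | h
  · exact (hT.lt_of_fst_lt hD hcol.symm h).ne (hc.trans hc'.symm)
  · exact (hT.lt_of_fst_lt hD hcol h).ne (hc'.trans hc.symm)

def cellsAbove (D : Finset Cell) (c : Cell) : Finset Cell := {d ∈ D | d.2 = c.2 ∧ d.1 < c.1}

def columnRankTableau (D : Finset Cell) (hn : #D ≤ n) (c : D) : Fin (n + 1) :=
  ⟨#(cellsAbove D c), Nat.lt_succ_of_le ((card_le_card (filter_subset _ _)).trans hn)⟩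

lemma columnRankTableau_eq_zero_iff (hn : #D ≤ n) (c : D) :
    columnRankTableau D hn c = 0 ↔ cellsAbove D c = ∅ := by
  rw [Fin.ext_iff, Fin.val_zero, ← card_eq_zero]
  rfl

lemma isSSYT_columnRankTableau (hD : (D : Set Cell).OrdConnected) (hn : #D ≤ n) :
    IsSSYT D (columnRankTableau D hn) := by
  constructor
  · rintro ⟨⟨i, j⟩, hc⟩ ⟨⟨i', j'⟩, hc'⟩ (rfl : i' = i) (rfl : j' = j + 1)
    refine Fin.mk_le_mk.2 (card_le_card_of_injOn (fun d => (d.1, d.2 + 1)) ?_ ?_)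
    · rintro ⟨k, l⟩ hd
      simp only [cellsAbove, coe_filter, Set.mem_ofPred_eq] at hd
      obtain ⟨hd, rfl, hk⟩ := hd
      exact mem_filter.2 ⟨hD.out hd hc' ⟨by simp, by simp; omega⟩, rfl, hk⟩
    · intro d _ d' _ h
      simp only [Prod.mk.injEq, add_left_inj] at h
      exact Prod.ext h.1 h.2
  · intro c c' hrow hcol
    refine Fin.mk_lt_mk.2 (card_lt_card ((ssubset_iff_of_subset ?_).2 ⟨c, ?_, ?_⟩))
    · intro d hd
      simp only [cellsAbove, mem_filter] at hd ⊢
      exact ⟨hd.1, hd.2.1.trans hcol.symm, by omega⟩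
    · exact mem_filter.2 ⟨c.2, hcol.symm, by omega⟩
    · simp [cellsAbove]

lemma card_columnRankTableau_fiber_zero (hn : #D ≤ n) :
    #{c | columnRankTableau D hn c = 0} = #(D.image Prod.snd) := by
  refine card_nbij (fun c => (c : Cell).2) (fun c _ => mem_image_of_mem _ c.2) ?_ ?_
  · intro c hc c' hc' hcol
    simp only [coe_filter, mem_univ, true_and, Set.mem_ofPred_eq,
      columnRankTableau_eq_zero_iff] at hc hc'
    by_contra hne
    have hrow : (c : Cell).1 ≠ (c' : Cell).1 := fun h => hne (Subtype.ext (Prod.ext h hcol))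
    rcases hrow.lt_or_gt with h | h
    · exact (eq_empty_iff_forall_notMem.1 hc') c (mem_filter.2 ⟨c.2, hcol, h⟩)
    · exact (eq_empty_iff_forall_notMem.1 hc) c' (mem_filter.2 ⟨c'.2, hcol.symm, h⟩)
  · intro j hj
    obtain ⟨x, hx, rfl⟩ := mem_image.1 hj
    obtain ⟨t, ht, hmin⟩ :=
      exists_min_image {d ∈ D | d.2 = x.2} Prod.fst ⟨x, mem_filter.2 ⟨hx, rfl⟩⟩
    rw [mem_filter] at ht
    refine ⟨⟨t, ht.1⟩, ?_, ht.2⟩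
    simp only [coe_filter, mem_univ, true_and, Set.mem_ofPred_eq, columnRankTableau_eq_zero_iff,
      cellsAbove, filter_eq_empty_iff]
    rintro d hd ⟨hcol, hrow⟩
    exact (hmin d (mem_filter.2 ⟨hd, hcol.trans ht.2⟩)).not_gt hrow

theorem degreeOf_zero_skewSchurPoly (hD : (D : Set Cell).OrdConnected) (hn : #D ≤ n) :
    degreeOf 0 (skewSchurPoly D (n + 1)) = #(D.image Prod.snd) := by
  rw [degreeOf_skewSchurPoly]
  refine le_antisymm (Finset.sup_le fun T hT => (mem_filter.1 hT).2.card_fiber_le hD 0) ?_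
  rw [← card_columnRankTableau_fiber_zero hn]
  exact le_sup (f := fun T => #{c | T c = 0})
    (mem_filter.2 ⟨mem_univ _, isSSYT_columnRankTableau hD hn⟩)

end OrdConnected

lemma IsPartitionList.getD_le_getD {l : List ℕ} (hl : IsPartitionList l) {i k : ℕ} (hik : i ≤ k) :
    l.getD k 0 ≤ l.getD i 0 := by
  by_cases hk : k < l.length
  · rw [List.getD_eq_getElem _ _ hk, List.getD_eq_getElem _ _ (hik.trans_lt hk)]
    exact (List.sortedGE_iff_pairwise.2 hl.1).getElem_ge_getElem_of_le hik
  · rw [List.getD_eq_default _ _ (not_lt.1 hk)]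
    exact Nat.zero_le _

lemma ordConnected_skewCells {lam mu : List ℕ} (hlam : IsPartitionList lam)
    (hmu : IsPartitionList mu) : (skewCells lam mu : Set Cell).OrdConnected := by
  refine Set.ordConnected_def.2 fun a ha c hc b ⟨hab, hbc⟩ => ?_
  rw [Prod.le_def] at hab hbc
  simp only [skewCells, coe_filter, mem_product, mem_Icc, Set.mem_ofPred_eq] at ha hc ⊢
  have hmu_le := hmu.getD_le_getD (show (a.1 - 1).toNat ≤ (b.1 - 1).toNat by omega)
  have hlam_le := hlam.getD_le_getD (show (b.1 - 1).toNat ≤ (c.1 - 1).toNat by omega)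
  omega

theorem equal_skew_schur_implies_equal_cols_general
    (lam mu sig tau : List ℕ)
    (hlam : IsPartitionList lam) (hmu : IsPartitionList mu)
    (hsig : IsPartitionList sig) (htau : IsPartitionList tau)
    (heq : SchurEq (skewCells lam mu) (skewCells sig tau)) :
    ((skewCells lam mu).image Prod.snd).card =
      ((skewCells sig tau).image Prod.snd).card := by
  set n := #(skewCells lam mu) + #(skewCells sig tau)
  rw [← degreeOf_zero_skewSchurPoly (ordConnected_skewCells hlam hmu) (n := n) (by omega),
    ← degreeOf_zero_skewSchurPoly (ordConnected_skewCells hsig htau) (n := n) (by omega),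
    heq (n + 1) (by omega)]

/-- If two skew diagrams have equal skew Schur functions, then they have the same
number of nonempty columns. -/
theorem equal_skew_schur_implies_equal_cols
    (lam mu sig tau : List ℕ)
    (hlam : IsPartitionList lam) (hmu : IsPartitionList mu)
    (hsig : IsPartitionList sig) (htau : IsPartitionList tau)
    (hml : ∀ i, mu.getD i 0 ≤ lam.getD i 0)
    (hts : ∀ i, tau.getD i 0 ≤ sig.getD i 0)
    (heq : SchurEq (skewCells lam mu) (skewCells sig tau)) :
    ((skewCells lam mu).image Prod.snd).card =
      ((skewCells sig tau).image Prod.snd).card :=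
  equal_skew_schur_implies_equal_cols_general lam mu sig tau hlam hmu hsig htau heq
end

section
/- Sylvester's Determinantal Identity: let R be a commutative ring, let M be an n-by-n matrix over R, and let S ⊆ {1,…,n} with |S| < n. Define a matrix syl(M,S), with rows and columns indexed by {1,…,n} ∖ S, by syl(M,S)_{i,j} := det M[S ∪ {i}, S ∪ {j}] for i, j ∉ S. Then (det M) · (det M[S,S])^{n−|S|−1} = det syl(M,S). -/
/-!
Move the rows and columns indexed by `S` to the front of `M`, obtaining a block matrix
`N = [[A, B], [C, D]]` with `A = M[S,S]`. Up to signs `ε i * ε j` with `ε i ^ 2 = 1`, which cancel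
in the determinant, the entry `(i, j)` of `syl(M,S)` is the determinant of `A` bordered by row `i`
and column `j` of `N`. If `A` is invertible, the Schur complement formula shows that this bordered
determinant is `det A * (D - C A⁻¹ B) i j`, so with `m = n - |S|` we get
`det syl = (det A) ^ m * det (D - C A⁻¹ B) = (det A) ^ (m - 1) * det N`. Both sides are integer polynomials in the entries of `N`, and for the
generic matrix `A` is invertible over the fraction field of the polynomial ring, so the identity
holds over every commutative ring.
-/

noncomputable def minorDet {R : Type*} [CommRing R] {n : ℕ}
    (M : Matrix (Fin n) (Fin n) R) (A B : Finset (Fin n)) : R :=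
  if h : B.card = A.card then
    Matrix.det (Matrix.of fun i j : Fin A.card =>
      M ((A.orderIsoOfFin rfl i : {x // x ∈ A}) : Fin n)
        ((B.orderIsoOfFin h j : {x // x ∈ B}) : Fin n))
  else 0

open Matrix Equiv

namespace Matrix

variable {R T : Type*} [CommRing R] [CommRing T]

lemma det_submatrix_equiv {α β : Type*} [Fintype α] [DecidableEq α] [Fintype β] [DecidableEq β]
    (Q : Matrix β β R) (p q r : α ≃ β) :
    (Q.submatrix p q).det = Perm.sign (p.trans r.symm) * Perm.sign (q.trans r.symm) * Q.det := by
  have hQ : Q.submatrix p q =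
      ((Q.submatrix r r).submatrix (p.trans r.symm) id).submatrix id (q.trans r.symm) := by
    ext; simp
  rw [hQ, det_permute', det_permute, det_submatrix_equiv_self, mul_left_comm, mul_assoc]

lemma det_diagonal_mul_mul_diagonal {κ : Type*} [Fintype κ] [DecidableEq κ] (u : κ → R)
    (hu : ∀ i, u i * u i = 1) (X : Matrix κ κ R) :
    (diagonal u * X * diagonal u).det = X.det := by
  rw [det_mul, det_mul, det_diagonal, mul_right_comm, ← Finset.prod_mul_distrib,
    Finset.prod_eq_one fun i _ => hu i, one_mul]

lemma submatrix_sum_map_id_eq_fromBlocks {α ι κ ι' κ' ρ σ : Type*}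
    (N : Matrix (ι ⊕ κ) (ι' ⊕ κ') α) (f : ρ → κ) (g : σ → κ') :
    N.submatrix (Sum.map id f) (Sum.map id g) =
      fromBlocks N.toBlocks₁₁ (N.toBlocks₁₂.submatrix id g) (N.toBlocks₂₁.submatrix f id)
        (N.toBlocks₂₂.submatrix f g) := by
  ext (a | a) (b | b) <;> rfl

lemma toBlocks₁₁_map {α β ι κ ι' κ' : Type*} (f : α → β) (N : Matrix (ι ⊕ κ) (ι' ⊕ κ') α) :
    (N.map f).toBlocks₁₁ = N.toBlocks₁₁.map f :=
  rfl

variable {ι κ : Type*} [Fintype ι] [DecidableEq ι]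

/-- The entry `(i, j)` is the minor of `N` on the rows `ι ∪ {i}` and the columns `ι ∪ {j}`. -/
def borderedMinors (N : Matrix (ι ⊕ κ) (ι ⊕ κ) R) : Matrix κ κ R :=
  of fun i j => (N.submatrix (Sum.map id fun _ : Unit => i) (Sum.map id fun _ : Unit => j)).det

lemma map_borderedMinors (f : R →+* T) (N : Matrix (ι ⊕ κ) (ι ⊕ κ) R) :
    N.borderedMinors.map f = (N.map f).borderedMinors := by
  ext i j
  simp [borderedMinors, RingHom.map_det, RingHom.mapMatrix_apply, submatrix_map]

lemma borderedMinors_eq_smul_schur (N : Matrix (ι ⊕ κ) (ι ⊕ κ) R) [Invertible N.toBlocks₁₁] :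
    N.borderedMinors =
      N.toBlocks₁₁.det • (N.toBlocks₂₂ - N.toBlocks₂₁ * ⅟N.toBlocks₁₁ * N.toBlocks₁₂) := by
  ext i j
  rw [borderedMinors, of_apply, submatrix_sum_map_id_eq_fromBlocks, det_fromBlocks₁₁,
    det_unique (n := Unit)]
  simp [mul_apply]

variable [Fintype κ] [DecidableEq κ]

lemma det_borderedMinors_of_invertible [Nonempty κ] (N : Matrix (ι ⊕ κ) (ι ⊕ κ) R)
    [Invertible N.toBlocks₁₁] :
    N.borderedMinors.det = N.det * N.toBlocks₁₁.det ^ (Fintype.card κ - 1) := by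
  have hN := det_fromBlocks₁₁ N.toBlocks₁₁ N.toBlocks₁₂ N.toBlocks₂₁ N.toBlocks₂₂
  rw [fromBlocks_toBlocks] at hN
  rw [borderedMinors_eq_smul_schur, det_smul, hN, mul_right_comm, ← pow_succ',
    Nat.sub_add_cancel Fintype.card_pos]

lemma det_toBlocks₁₁_mvPolynomialX_ne_zero :
    (mvPolynomialX (ι ⊕ κ) (ι ⊕ κ) ℤ).toBlocks₁₁.det ≠ 0 := by
  intro h
  have h1 := congr_arg (fun X : Matrix (ι ⊕ κ) (ι ⊕ κ) ℤ => X.toBlocks₁₁.det)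
    (mvPolynomialX_mapMatrix_eval (fromBlocks (1 : Matrix ι ι ℤ) 0 0 (1 : Matrix κ κ ℤ)))
  rw [RingHom.mapMatrix_apply, toBlocks₁₁_map, ← RingHom.mapMatrix_apply, ← RingHom.map_det, h,
    map_zero, toBlocks_fromBlocks₁₁, det_one] at h1
  exact zero_ne_one h1

lemma map_det_mul_det_toBlocks₁₁_pow (f : R →+* T) (N : Matrix (ι ⊕ κ) (ι ⊕ κ) R) (k : ℕ) :
    f (N.det * N.toBlocks₁₁.det ^ k) = (N.map f).det * (N.map f).toBlocks₁₁.det ^ k := by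
  rw [map_mul, map_pow, RingHom.map_det, RingHom.map_det, toBlocks₁₁_map]
  rfl

lemma map_det_borderedMinors (f : R →+* T) (N : Matrix (ι ⊕ κ) (ι ⊕ κ) R) :
    f N.borderedMinors.det = (N.map f).borderedMinors.det := by
  rw [RingHom.map_det, RingHom.mapMatrix_apply, map_borderedMinors]

theorem det_borderedMinors [Nonempty κ] (N : Matrix (ι ⊕ κ) (ι ⊕ κ) R) :
    N.borderedMinors.det = N.det * N.toBlocks₁₁.det ^ (Fintype.card κ - 1) := by
  let X := mvPolynomialX (ι ⊕ κ) (ι ⊕ κ) ℤ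
  let K := FractionRing (MvPolynomial ((ι ⊕ κ) × (ι ⊕ κ)) ℤ)
  have generic : X.borderedMinors.det = X.det * X.toBlocks₁₁.det ^ (Fintype.card κ - 1) := by
    apply IsFractionRing.injective _ K
    rw [map_det_borderedMinors, map_det_mul_det_toBlocks₁₁_pow]
    have hunit : IsUnit (X.map (algebraMap _ K)).toBlocks₁₁.det := by
      rw [isUnit_iff_ne_zero, toBlocks₁₁_map, ← RingHom.mapMatrix_apply, ← RingHom.map_det,
        map_ne_zero_iff _ (IsFractionRing.injective _ K)]
      exact det_toBlocks₁₁_mvPolynomialX_ne_zero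
    have := (X.map (algebraMap _ K)).toBlocks₁₁.invertibleOfIsUnitDet hunit
    exact det_borderedMinors_of_invertible _
  have := congr_arg (MvPolynomial.eval₂Hom (Int.castRingHom R) fun p => N p.1 p.2) generic
  rwa [map_det_borderedMinors, map_det_mul_det_toBlocks₁₁_pow, MvPolynomial.coe_eval₂Hom,
    mvPolynomialX_map_eval₂] at this

end Matrix

namespace Finset

variable {α : Type*} [DecidableEq α]

def insertEquivSumUnit {S : Finset α} {i : α} (hi : i ∉ S) : S ⊕ Unit ≃ (insert i S : Finset α) :=
  (optionEquivSumPUnit S).symm.trans (subtypeInsertEquivOption hi).symm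

lemma sumCompl_sum_map_eq_insertEquivSumUnit (S : Finset α) (i : {x // x ∉ S}) (z : S ⊕ Unit) :
    sumCompl (· ∈ S) (Sum.map id (fun _ => i) z) = S.insertEquivSumUnit i.2 z := by
  cases z <;> rfl

end Finset

section minorDet

variable {R : Type*} [CommRing R] {n : ℕ}

lemma minorDet_eq_det_submatrix (M : Matrix (Fin n) (Fin n) R) {A B : Finset (Fin n)} {c : ℕ}
    (hA : A.card = c) (hB : B.card = c) :
    minorDet M A B =
      (M.submatrix (fun a => (A.orderIsoOfFin hA a : Fin n))
        (fun b => (B.orderIsoOfFin hB b : Fin n))).det := by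
  subst hA
  rw [minorDet, dif_pos hB]
  rfl

lemma minorDet_self (M : Matrix (Fin n) (Fin n) R) (S : Finset (Fin n)) :
    minorDet M S S = (M.submatrix (Subtype.val : S → Fin n) Subtype.val).det := by
  rw [minorDet_eq_det_submatrix M rfl rfl]
  exact det_submatrix_equiv_self (S.orderIsoOfFin rfl).toEquiv
    (M.submatrix Subtype.val Subtype.val)

/-- `ε i` is the sign by which the increasing enumeration of `insert i S` differs from the
enumeration `S ⊕ Unit` used by `borderedMinors`, both measured against a fixed `r`. -/
lemma exists_minorDet_insert_eq_diagonal_mul_borderedMinors (M : Matrix (Fin n) (Fin n) R)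
    (S : Finset (Fin n)) :
    ∃ ε : {x // x ∉ S} → R, (∀ i, ε i * ε i = 1) ∧
      (of fun i j : {x // x ∉ S} => minorDet M (insert i.1 S) (insert j.1 S)) =
        diagonal ε * (M.submatrix (sumCompl (· ∈ S)) (sumCompl (· ∈ S))).borderedMinors *
          diagonal ε := by
  let r : Fin (S.card + 1) ≃ S ⊕ Unit := (Fintype.equivFinOfCardEq (by simp)).symm
  let q (i : {x // x ∉ S}) : Fin (S.card + 1) ≃ S ⊕ Unit :=
    ((insert i.1 S).orderIsoOfFin (S.card_insert_of_notMem i.2)).toEquiv.trans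
      (S.insertEquivSumUnit i.2).symm
  refine ⟨fun i => (Perm.sign ((q i).trans r.symm) : R), fun i => ?_, ?_⟩
  · rw [← Int.cast_mul, ← Units.val_mul, Int.units_mul_self, Units.val_one, Int.cast_one]
  · ext i j
    rw [of_apply, mul_diagonal, diagonal_mul, borderedMinors, of_apply,
      minorDet_eq_det_submatrix M (S.card_insert_of_notMem i.2) (S.card_insert_of_notMem j.2),
      mul_right_comm, ← det_submatrix_equiv _ (q i) (q j) r]
    congr 1
    ext a b
    simp only [submatrix_apply, Finset.sumCompl_sum_map_eq_insertEquivSumUnit, q, trans_apply,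
      apply_symm_apply]
    rfl

end minorDet

/-- Sylvester's Determinantal Identity: for an n-by-n matrix `M` over a commutative
ring and `S ⊆ {1,…,n}` with `|S| < n`, letting `syl(M,S)` be the matrix indexed by
the complement of `S` with entries `syl(M,S)_{i,j} = det M[S ∪ {i}, S ∪ {j}]`, one has
`det M · (det M[S,S])^(n−|S|−1) = det syl(M,S)`. -/
theorem sylvester_determinantal_identity {R : Type*} [CommRing R] {n : ℕ}
    (M : Matrix (Fin n) (Fin n) R) (S : Finset (Fin n)) (hS : S.card < n) :
    M.det * (minorDet M S S) ^ (n - S.card - 1) =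
      Matrix.det (Matrix.of fun i j : {x : Fin n // x ∉ S} =>
        minorDet M (insert i.1 S) (insert j.1 S)) := by
  have hcard : Fintype.card {x : Fin n // x ∉ S} = n - S.card := by
    simp [Fintype.card_subtype_compl]
  have : Nonempty {x : Fin n // x ∉ S} := Fintype.card_pos_iff.mp (by omega)
  obtain ⟨ε, hε, hminors⟩ := exists_minorDet_insert_eq_diagonal_mul_borderedMinors M S
  let N := M.submatrix (sumCompl (· ∈ S)) (sumCompl (· ∈ S))
  calc M.det * minorDet M S S ^ (n - S.card - 1)
      = N.det * N.toBlocks₁₁.det ^ (Fintype.card {x : Fin n // x ∉ S} - 1) := by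
        rw [det_submatrix_equiv_self, hcard, minorDet_self]
        rfl
    _ = N.borderedMinors.det := (det_borderedMinors N).symm
    _ = _ := by rw [hminors, det_diagonal_mul_mul_diagonal ε hε]
end

section
/- The skew diagrams (4,3,2,1)/(2) and (4,3,2,1)/(1,1) have equal skew Schur functions: for every n ≥ 1, s_{(4,3,2,1)/(2)}(x₁,…,x_n) = s_{(4,3,2,1)/(1,1)}(x₁,…,x_n). (This is the unique non-trivial skew-equivalence among skew diagrams with at most 8 cells.) -/
open scoped Classical

namespace SkewEquivAux4321

def E1c : Finset Cell := {((1:ℤ),(3:ℤ)), ((1:ℤ),(4:ℤ)), ((2:ℤ),(1:ℤ)), ((2:ℤ),(2:ℤ)), ((2:ℤ),(3:ℤ)), ((3:ℤ),(1:ℤ)), ((3:ℤ),(2:ℤ)), ((4:ℤ),(1:ℤ))}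
def E2c : Finset Cell := {((1:ℤ),(2:ℤ)), ((1:ℤ),(3:ℤ)), ((1:ℤ),(4:ℤ)), ((2:ℤ),(2:ℤ)), ((2:ℤ),(3:ℤ)), ((3:ℤ),(1:ℤ)), ((3:ℤ),(2:ℤ)), ((4:ℤ),(1:ℤ))}

lemma mE1_13 : ((1:ℤ),(3:ℤ)) ∈ E1c := by decide
lemma mE1_14 : ((1:ℤ),(4:ℤ)) ∈ E1c := by decide
lemma mE1_21 : ((2:ℤ),(1:ℤ)) ∈ E1c := by decide
lemma mE1_22 : ((2:ℤ),(2:ℤ)) ∈ E1c := by decide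
lemma mE1_23 : ((2:ℤ),(3:ℤ)) ∈ E1c := by decide
lemma mE1_31 : ((3:ℤ),(1:ℤ)) ∈ E1c := by decide
lemma mE1_32 : ((3:ℤ),(2:ℤ)) ∈ E1c := by decide
lemma mE1_41 : ((4:ℤ),(1:ℤ)) ∈ E1c := by decide
lemma mE2_12 : ((1:ℤ),(2:ℤ)) ∈ E2c := by decide
lemma mE2_13 : ((1:ℤ),(3:ℤ)) ∈ E2c := by decide
lemma mE2_14 : ((1:ℤ),(4:ℤ)) ∈ E2c := by decide
lemma mE2_22 : ((2:ℤ),(2:ℤ)) ∈ E2c := by decide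
lemma mE2_23 : ((2:ℤ),(3:ℤ)) ∈ E2c := by decide
lemma mE2_31 : ((3:ℤ),(1:ℤ)) ∈ E2c := by decide
lemma mE2_32 : ((3:ℤ),(2:ℤ)) ∈ E2c := by decide
lemma mE2_41 : ((4:ℤ),(1:ℤ)) ∈ E2c := by decide

variable {n : ℕ}

def phiCore (a b c d e f g h : Fin n) : Fin n × Fin n × Fin n × Fin n × Fin n × Fin n × Fin n × Fin n :=
  (if a.val < d.val then (if b.val < e.val then (if a.val < c.val then (if b.val < d.val then (if b.val < d.val then (if a.val < c.val then (a, b, e, c, d, f, g, h) else (a, b, c, d, e, f, g, h)) else (a, b, c, d, e, f, g, h)) else (if e.val < g.val then (if d.val < e.val then (if a.val < c.val then (a, d, b, c, e, f, g, h) else (a, b, c, d, e, f, g, h)) else (a, b, c, d, e, f, g, h)) else (if g.val < f.val then (a, b, c, d, e, f, g, h) else (if a.val < c.val then (a, d, b, c, e, f, g, h) else (a, b, c, d, e, f, g, h))))) else (if d.val < f.val then (if e.val < g.val then (if a.val < e.val then (if c.val < d.val then (c, a, b, d, e, f, g, h) else (a, b, c, d, e, f, g, h)) else (a, b, c, d,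 e, f, g, h)) else (if g.val < f.val then (a, b, c, d, e, f, g, h) else (if c.val < d.val then (c, a, b, d, e, f, g, h) else (a, b, c, d, e, f, g, h)))) else (if g.val < h.val then (if d.val < g.val then (c, a, b, d, e, f, g, h) else (a, b, c, d, e, f, g, h)) else (c, a, b, d, e, f, g, h)))) else (if a.val < c.val then (if e.val < d.val then (a, b, c, d, e, f, g, h) else (if e.val < g.val then (if d.val < c.val then (a, b, c, d, e, f, g, h) else (if d.val < f.val then (a, e, b, d, g, c, f, h) else (if a.val < c.val then (a, e, b, c, g, f, d, h) else (a, b, c, d, e, f, g, h)))) else (if g.val < f.val then (a, b, c, d, e, f, g, h) else (if a.val < c.val then (a, d, b, c, e, f, g, h) else (a, b, c, d, e, f, g, h))))) else (if d.val < f.val then (if e.val < g.val then (if a.val < d.val then (if d.val < f.val then (a, e, b, d, g, c, f, h) else (a, b, c, d, e, f, g, h)) else (a, b, c, d, e, f, g, h)) else (if g.val < f.val then (a, b, c, d, e, f, g, h) else (if c.val < d.val then (c, a, b, d, e, f, g, h) else (a, b, c, d, e, f, g, h)))) else (if g.val < h.val then (if e.val < d.val then (a, b, c, d, e, f, g, h)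 else (if d.val < g.val then (c, a, b, d, e, f, g, h) else (a, b, c, d, e, f, g, h))) else (if e.val < d.val then (a, b, c, d, e, f, g, h) else (c, a, b, d, e, f, g, h)))))) else (if e.val < g.val then (if d.val < c.val then (a, b, c, d, e, f, g, h) else (if e.val < f.val then (if a.val < g.val then (if d.val < e.val then (if e.val < f.val then (d, a, b, e, g, c, f, h) else (a, b, c, d, e, f, g, h)) else (a, b, c, d, e, f, g, h)) else (a, b, c, d, e, f, g, h)) else (if g.val < h.val then (if a.val < e.val then (if d.val < f.val then (if f.val < g.val then (d, a, b, f, e, c, g, h) else (a, b, c, d, e, f, g, h)) else (if d.val < g.val then (c, a, b, d, e, f, g, h) else (a, b, c, d, e, f, g, h))) else (a, b, c, d, e, f, g, h)) else (if a.val < e.val then (if d.val < f.val then (d, a, b, f, e, c, g, h) else (c, a, b, d, e, f, g, h)) else (a, b, c, d, e, f, g, h))))) else (if d.val < c.val then (a, b, c, d, e, f, g, h) else (if g.val < f.val then (a, b, c, d, e, f, g, h) else (if g.val < h.val then (d, a, b, g, e, c, h, f) else (if d.val < f.val then (d, a, b, f, e, c, g, h) else (c, a, b, d, e, f, g, h)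))))))

def psiCore (a b c d e f g h : Fin n) : Fin n × Fin n × Fin n × Fin n × Fin n × Fin n × Fin n × Fin n :=
  (if d.val < f.val then (if e.val < g.val then (if a.val < d.val then (if b.val < e.val then (if c.val < e.val then (if b.val < d.val then (b, c, a, d, e, f, g, h) else (a, c, d, b, e, f, g, h)) else (a, b, d, e, c, f, g, h)) else (a, b, c, d, e, f, g, h)) else (a, b, c, d, e, f, g, h)) else (if a.val < d.val then (if b.val < g.val then (if c.val < e.val then (if g.val < f.val then (a, b, c, d, e, f, g, h) else (if b.val < d.val then (b, c, a, d, e, f, g, h) else (a, c, d, b, e, f, g, h))) else (if g.val < f.val then (a, b, c, d, e, f, g, h) else (if b.val < d.val then (if e.val < d.val then (a, b, c, d, e, f, g, h) else (b, c, a, d, e, f, g, h)) else (if e.val < b.val then (a, b, c, d, e, f, g, h) else (a, c, d, b, e, f, g, h))))) else (if e.val < f.val then (a, b, c, d, e, f, g, h) else (if g.val < d.val then (a, b, c, d, e, f, g, h) else (if b.val < g.val then (a, b, c, d, e, f, g, h) else (a, c, d, g, b, f, e, h))))) else (a, b, c, d, e, f, g, h))) else (if g.val < h.val then (if a.val < f.val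 then (if b.val < d.val then (if c.val < e.val then (if d.val < g.val then (b, c, a, d, e, f, g, h) else (a, b, c, d, e, f, g, h)) else (if d.val < g.val then (if e.val < d.val then (a, b, c, d, e, f, g, h) else (b, c, a, d, e, f, g, h)) else (a, b, c, d, e, f, g, h))) else (if e.val < g.val then (if b.val < e.val then (if d.val < a.val then (a, b, c, d, e, f, g, h) else (b, c, a, d, e, f, g, h)) else (a, b, c, d, e, f, g, h)) else (if d.val < f.val then (a, b, c, d, e, f, g, h) else (if b.val < d.val then (a, b, c, d, e, f, g, h) else (a, c, f, d, b, g, e, h))))) else (if d.val < g.val then (if e.val < g.val then (if b.val < e.val then (if a.val < f.val then (a, b, c, d, e, f, g, h) else (b, c, f, a, e, d, g, h)) else (a, b, c, d, e, f, g, h)) else (if a.val < d.val then (if b.val < d.val then (if a.val < f.val then (a, b, c, d, e, f, g, h) else (b, c, f, a, d, g, e, h)) else (a, c, f, d, b, g, e, h)) else (a, b, c, d, e, f, g, h))) else (a, b, c, d, e, f, g, h))) else (if a.val < f.val then (if b.val < d.val then (if c.val < e.val then (b, c, a, d, e, f, g, h) else (if e.val < d.val then (a, b, c, d, e, f, g,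 h) else (b, c, a, d, e, f, g, h))) else (if e.val < g.val then (if b.val < e.val then (if d.val < a.val then (a, b, c, d, e, f, g, h) else (b, c, a, d, e, f, g, h)) else (a, b, c, d, e, f, g, h)) else (if g.val < f.val then (a, b, c, d, e, f, g, h) else (if d.val < a.val then (a, b, c, d, e, f, g, h) else (b, c, a, d, e, f, g, h))))) else (if d.val < h.val then (if e.val < g.val then (if b.val < e.val then (if a.val < f.val then (a, b, c, d, e, f, g, h) else (b, c, f, a, e, d, g, h)) else (a, b, c, d, e, f, g, h)) else (if g.val < d.val then (a, b, c, d, e, f, g, h) else (if a.val < f.val then (a, b, c, d, e, f, g, h) else (b, c, f, a, e, d, g, h)))) else (if d.val < h.val then (a, b, c, d, e, f, g, h) else (if a.val < f.val then (a, b, c, d, e, f, g, h) else (b, c, f, a, e, h, d, g)))))))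

set_option maxHeartbeats 8000000 in
lemma phi_spec (a b c d e f g h : Fin n)
    (H1 : a ≤ b) (H2 : c ≤ d) (H3 : d ≤ e) (H4 : f ≤ g) (H5 : a < e) (H6 : c < f) (H7 : d < g) (H8 : f < h) :
    ∀ p q r s t u v w : Fin n, phiCore a b c d e f g h = (p, q, r, s, t, u, v, w) →
      p ≤ q ∧ q ≤ r ∧ s ≤ t ∧ u ≤ v ∧ p < s ∧ q < t ∧ s < v ∧ u < w := by
  intro p q r s t u v w hpq
  unfold phiCore at hpq
  simp only [Fin.le_def, Fin.lt_def] at H1 H2 H3 H4 H5 H6 H7 H8 ⊢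
  split_ifs at hpq <;>
  · simp only [Prod.mk.injEq] at hpq
    obtain ⟨rfl, rfl, rfl, rfl, rfl, rfl, rfl, rfl⟩ := hpq
    refine ⟨?_, ?_, ?_, ?_, ?_, ?_, ?_, ?_⟩ <;> omega

set_option maxHeartbeats 16000000 in
lemma phi_inv (a b c d e f g h : Fin n)
    (H1 : a ≤ b) (H2 : c ≤ d) (H3 : d ≤ e) (H4 : f ≤ g) (H5 : a < e) (H6 : c < f) (H7 : d < g) (H8 : f < h) :
    ∀ p q r s t u v w : Fin n, phiCore a b c d e f g h = (p, q, r, s, t, u, v, w) →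
      psiCore p q r s t u v w = (a, b, c, d, e, f, g, h) := by
  intro p q r s t u v w hpq
  unfold phiCore at hpq
  simp only [Fin.le_def, Fin.lt_def] at H1 H2 H3 H4 H5 H6 H7 H8
  split_ifs at hpq <;>
  · simp only [Prod.mk.injEq] at hpq
    obtain ⟨rfl, rfl, rfl, rfl, rfl, rfl, rfl, rfl⟩ := hpq
    first
    | (exfalso; omega)
    | (unfold psiCore
       split_ifs <;> first | rfl | (exfalso; omega))

set_option maxHeartbeats 8000000 in
lemma psi_spec (a b c d e f g h : Fin n)
    (H1 : a ≤ b) (H2 : b ≤ c) (H3 : d ≤ e) (H4 : f ≤ g) (H5 : a < d) (H6 : b < e) (H7 : d < g) (H8 : f < h) :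
    ∀ p q r s t u v w : Fin n, psiCore a b c d e f g h = (p, q, r, s, t, u, v, w) →
      p ≤ q ∧ r ≤ s ∧ s ≤ t ∧ u ≤ v ∧ p < t ∧ r < u ∧ s < v ∧ u < w := by
  intro p q r s t u v w hpq
  unfold psiCore at hpq
  simp only [Fin.le_def, Fin.lt_def] at H1 H2 H3 H4 H5 H6 H7 H8 ⊢
  split_ifs at hpq <;>
  · simp only [Prod.mk.injEq] at hpq
    obtain ⟨rfl, rfl, rfl, rfl, rfl, rfl, rfl, rfl⟩ := hpq
    refine ⟨?_, ?_, ?_, ?_, ?_, ?_, ?_, ?_⟩ <;> omega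

set_option maxHeartbeats 16000000 in
lemma psi_inv (a b c d e f g h : Fin n)
    (H1 : a ≤ b) (H2 : b ≤ c) (H3 : d ≤ e) (H4 : f ≤ g) (H5 : a < d) (H6 : b < e) (H7 : d < g) (H8 : f < h) :
    ∀ p q r s t u v w : Fin n, psiCore a b c d e f g h = (p, q, r, s, t, u, v, w) →
      phiCore p q r s t u v w = (a, b, c, d, e, f, g, h) := by
  intro p q r s t u v w hpq
  unfold psiCore at hpq
  simp only [Fin.le_def, Fin.lt_def] at H1 H2 H3 H4 H5 H6 H7 H8
  split_ifs at hpq <;>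
  · simp only [Prod.mk.injEq] at hpq
    obtain ⟨rfl, rfl, rfl, rfl, rfl, rfl, rfl, rfl⟩ := hpq
    first
    | (exfalso; omega)
    | (unfold phiCore
       split_ifs <;> first | rfl | (exfalso; omega))

set_option maxHeartbeats 8000000 in
lemma phi_prod {M : Type*} [CommSemiring M] (x : Fin n → M) (a b c d e f g h : Fin n) :
    ∀ p q r s t u v w : Fin n, phiCore a b c d e f g h = (p, q, r, s, t, u, v, w) →
      x p * x q * x r * x s * x t * x u * x v * x w =
        x a * x b * x c * x d * x e * x f * x g * x h := by
  intro p q r s t u v w hpq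
  unfold phiCore at hpq
  split_ifs at hpq <;>
  · simp only [Prod.mk.injEq] at hpq
    obtain ⟨rfl, rfl, rfl, rfl, rfl, rfl, rfl, rfl⟩ := hpq
    ring

set_option maxHeartbeats 2000000 in
lemma char1 (T : E1c → Fin n) :
    IsSSYT E1c T ↔
      (T ⟨(1,3), mE1_13⟩ ≤ T ⟨(1,4), mE1_14⟩ ∧
      T ⟨(2,1), mE1_21⟩ ≤ T ⟨(2,2), mE1_22⟩ ∧
      T ⟨(2,2), mE1_22⟩ ≤ T ⟨(2,3), mE1_23⟩ ∧
      T ⟨(3,1), mE1_31⟩ ≤ T ⟨(3,2), mE1_32⟩ ∧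
      T ⟨(1,3), mE1_13⟩ < T ⟨(2,3), mE1_23⟩ ∧
      T ⟨(2,1), mE1_21⟩ < T ⟨(3,1), mE1_31⟩ ∧
      T ⟨(2,2), mE1_22⟩ < T ⟨(3,2), mE1_32⟩ ∧
      T ⟨(3,1), mE1_31⟩ < T ⟨(4,1), mE1_41⟩) := by
  constructor
  · rintro ⟨hr, hc⟩
    exact ⟨hr ⟨(1,3), mE1_13⟩ ⟨(1,4), mE1_14⟩ rfl (by norm_num), hr ⟨(2,1), mE1_21⟩ ⟨(2,2), mE1_22⟩ rfl (by norm_num), hr ⟨(2,2), mE1_22⟩ ⟨(2,3), mE1_23⟩ rfl (by norm_num), hr ⟨(3,1), mE1_31⟩ ⟨(3,2), mE1_32⟩ rfl (by norm_num), hc ⟨(1,3), mE1_13⟩ ⟨(2,3), mE1_23⟩ (by norm_num) rfl, hc ⟨(2,1), mE1_21⟩ ⟨(3,1), mE1_31⟩ (by norm_num) rfl, hc ⟨(2,2), mE1_22⟩ ⟨(3,2), mE1_32⟩ (by norm_num) rfl, hc ⟨(3,1), mE1_31⟩ ⟨(4,1), mE1_41⟩ (by norm_num) rfl⟩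
  · rintro ⟨p1, p2, p3, p4, p5, p6, p7, p8⟩
    constructor <;>
    · rintro ⟨z, hz⟩ ⟨z', hz'⟩ h1 h2
      fin_cases hz <;> fin_cases hz' <;> simp_all

set_option maxHeartbeats 2000000 in
lemma char2 (T : E2c → Fin n) :
    IsSSYT E2c T ↔
      (T ⟨(1,2), mE2_12⟩ ≤ T ⟨(1,3), mE2_13⟩ ∧
      T ⟨(1,3), mE2_13⟩ ≤ T ⟨(1,4), mE2_14⟩ ∧
      T ⟨(2,2), mE2_22⟩ ≤ T ⟨(2,3), mE2_23⟩ ∧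
      T ⟨(3,1), mE2_31⟩ ≤ T ⟨(3,2), mE2_32⟩ ∧
      T ⟨(1,2), mE2_12⟩ < T ⟨(2,2), mE2_22⟩ ∧
      T ⟨(1,3), mE2_13⟩ < T ⟨(2,3), mE2_23⟩ ∧
      T ⟨(2,2), mE2_22⟩ < T ⟨(3,2), mE2_32⟩ ∧
      T ⟨(3,1), mE2_31⟩ < T ⟨(4,1), mE2_41⟩) := by
  constructor
  · rintro ⟨hr, hc⟩
    exact ⟨hr ⟨(1,2), mE2_12⟩ ⟨(1,3), mE2_13⟩ rfl (by norm_num), hr ⟨(1,3), mE2_13⟩ ⟨(1,4), mE2_14⟩ rfl (by norm_num), hr ⟨(2,2), mE2_22⟩ ⟨(2,3), mE2_23⟩ rfl (by norm_num), hr ⟨(3,1), mE2_31⟩ ⟨(3,2), mE2_32⟩ rfl (by norm_num), hc ⟨(1,2), mE2_12⟩ ⟨(2,2), mE2_22⟩ (by norm_num) rfl, hc ⟨(1,3), mE2_13⟩ ⟨(2,3), mE2_23⟩ (by norm_num) rfl, hc ⟨(2,2), mE2_22⟩ ⟨(3,2), mE2_32⟩ (by norm_num) rfl, hc ⟨(3,1),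 mE2_31⟩ ⟨(4,1), mE2_41⟩ (by norm_num) rfl⟩
  · rintro ⟨p1, p2, p3, p4, p5, p6, p7, p8⟩
    constructor <;>
    · rintro ⟨z, hz⟩ ⟨z', hz'⟩ h1 h2
      fin_cases hz <;> fin_cases hz' <;> simp_all

lemma prodE1_gen {M : Type*} [CommMonoid M] (F : Cell → M) :
    ∏ z ∈ E1c, F z = F (1,3) * F (1,4) * F (2,1) * F (2,2) * F (2,3) * F (3,1) * F (3,2) * F (4,1) := by
  show ∏ z ∈ ({((1:ℤ),(3:ℤ)), ((1:ℤ),(4:ℤ)), ((2:ℤ),(1:ℤ)), ((2:ℤ),(2:ℤ)), ((2:ℤ),(3:ℤ)), ((3:ℤ),(1:ℤ)), ((3:ℤ),(2:ℤ)), ((4:ℤ),(1:ℤ))} : Finset Cell), F z = _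
  rw [Finset.prod_insert (by decide), Finset.prod_insert (by decide), Finset.prod_insert (by decide), Finset.prod_insert (by decide), Finset.prod_insert (by decide), Finset.prod_insert (by decide), Finset.prod_insert (by decide), Finset.prod_singleton]
  simp only [mul_assoc]

lemma prodE1 (T : E1c → Fin n) :
    ∏ c : E1c, (MvPolynomial.X (T c) : MvPolynomial (Fin n) ℤ) = MvPolynomial.X (T ⟨(1,3), mE1_13⟩) * MvPolynomial.X (T ⟨(1,4), mE1_14⟩) * MvPolynomial.X (T ⟨(2,1), mE1_21⟩) * MvPolynomial.X (T ⟨(2,2), mE1_22⟩) * MvPolynomial.X (T ⟨(2,3), mE1_23⟩) * MvPolynomial.X (T ⟨(3,1), mE1_31⟩) * MvPolynomial.X (T ⟨(3,2), mE1_32⟩) * MvPolynomial.X (T ⟨(4,1), mE1_41⟩) := by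
  classical
  have h1 : ∏ c : E1c, (MvPolynomial.X (T c) : MvPolynomial (Fin n) ℤ) =
      ∏ c : E1c, (fun z : Cell => if h : z ∈ E1c then (MvPolynomial.X (T ⟨z, h⟩) :
        MvPolynomial (Fin n) ℤ) else 1) c := by
    refine Finset.prod_congr rfl fun c _ => ?_
    obtain ⟨z, hz⟩ := c
    simp [hz]
  rw [h1, Finset.prod_coe_sort E1c (fun z : Cell =>
      if h : z ∈ E1c then (MvPolynomial.X (T ⟨z, h⟩) : MvPolynomial (Fin n) ℤ) else 1),
    prodE1_gen]
  rw [dif_pos, dif_pos, dif_pos, dif_pos, dif_pos, dif_pos, dif_pos, dif_pos]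

lemma prodE2_gen {M : Type*} [CommMonoid M] (F : Cell → M) :
    ∏ z ∈ E2c, F z = F (1,2) * F (1,3) * F (1,4) * F (2,2) * F (2,3) * F (3,1) * F (3,2) * F (4,1) := by
  show ∏ z ∈ ({((1:ℤ),(2:ℤ)), ((1:ℤ),(3:ℤ)), ((1:ℤ),(4:ℤ)), ((2:ℤ),(2:ℤ)), ((2:ℤ),(3:ℤ)), ((3:ℤ),(1:ℤ)), ((3:ℤ),(2:ℤ)), ((4:ℤ),(1:ℤ))} : Finset Cell), F z = _
  rw [Finset.prod_insert (by decide), Finset.prod_insert (by decide), Finset.prod_insert (by decide), Finset.prod_insert (by decide), Finset.prod_insert (by decide), Finset.prod_insert (by decide), Finset.prod_insert (by decide), Finset.prod_singleton]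
  simp only [mul_assoc]

lemma prodE2 (T : E2c → Fin n) :
    ∏ c : E2c, (MvPolynomial.X (T c) : MvPolynomial (Fin n) ℤ) = MvPolynomial.X (T ⟨(1,2), mE2_12⟩) * MvPolynomial.X (T ⟨(1,3), mE2_13⟩) * MvPolynomial.X (T ⟨(1,4), mE2_14⟩) * MvPolynomial.X (T ⟨(2,2), mE2_22⟩) * MvPolynomial.X (T ⟨(2,3), mE2_23⟩) * MvPolynomial.X (T ⟨(3,1), mE2_31⟩) * MvPolynomial.X (T ⟨(3,2), mE2_32⟩) * MvPolynomial.X (T ⟨(4,1), mE2_41⟩) := by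
  classical
  have h1 : ∏ c : E2c, (MvPolynomial.X (T c) : MvPolynomial (Fin n) ℤ) =
      ∏ c : E2c, (fun z : Cell => if h : z ∈ E2c then (MvPolynomial.X (T ⟨z, h⟩) :
        MvPolynomial (Fin n) ℤ) else 1) c := by
    refine Finset.prod_congr rfl fun c _ => ?_
    obtain ⟨z, hz⟩ := c
    simp [hz]
  rw [h1, Finset.prod_coe_sort E2c (fun z : Cell =>
      if h : z ∈ E2c then (MvPolynomial.X (T ⟨z, h⟩) : MvPolynomial (Fin n) ℤ) else 1),
    prodE2_gen]
  rw [dif_pos, dif_pos, dif_pos, dif_pos, dif_pos, dif_pos, dif_pos, dif_pos]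

def phiT (T : E1c → Fin n) := phiCore (T ⟨(1,3), mE1_13⟩) (T ⟨(1,4), mE1_14⟩) (T ⟨(2,1), mE1_21⟩) (T ⟨(2,2), mE1_22⟩) (T ⟨(2,3), mE1_23⟩) (T ⟨(3,1), mE1_31⟩) (T ⟨(3,2), mE1_32⟩) (T ⟨(4,1), mE1_41⟩)

def psiT (U : E2c → Fin n) := psiCore (U ⟨(1,2), mE2_12⟩) (U ⟨(1,3), mE2_13⟩) (U ⟨(1,4), mE2_14⟩) (U ⟨(2,2), mE2_22⟩) (U ⟨(2,3), mE2_23⟩) (U ⟨(3,1), mE2_31⟩) (U ⟨(3,2), mE2_32⟩) (U ⟨(4,1), mE2_41⟩)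

def toFun (T : E1c → Fin n) : E2c → Fin n := fun c =>
  if (c : Cell) = (1,2) then (phiT T).1 else
  if (c : Cell) = (1,3) then (phiT T).2.1 else
  if (c : Cell) = (1,4) then (phiT T).2.2.1 else
  if (c : Cell) = (2,2) then (phiT T).2.2.2.1 else
  if (c : Cell) = (2,3) then (phiT T).2.2.2.2.1 else
  if (c : Cell) = (3,1) then (phiT T).2.2.2.2.2.1 else
  if (c : Cell) = (3,2) then (phiT T).2.2.2.2.2.2.1 else
  (phiT T).2.2.2.2.2.2.2

def fromFun (U : E2c → Fin n) : E1c → Fin n := fun c =>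
  if (c : Cell) = (1,3) then (psiT U).1 else
  if (c : Cell) = (1,4) then (psiT U).2.1 else
  if (c : Cell) = (2,1) then (psiT U).2.2.1 else
  if (c : Cell) = (2,2) then (psiT U).2.2.2.1 else
  if (c : Cell) = (2,3) then (psiT U).2.2.2.2.1 else
  if (c : Cell) = (3,1) then (psiT U).2.2.2.2.2.1 else
  if (c : Cell) = (3,2) then (psiT U).2.2.2.2.2.2.1 else
  (psiT U).2.2.2.2.2.2.2

lemma toFun_at1 (T : E1c → Fin n) (hm : ((1:ℤ),(2:ℤ)) ∈ E2c) :
    toFun T ⟨(1,2), hm⟩ = (phiT T).1 := by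
  norm_num [toFun]

lemma toFun_at2 (T : E1c → Fin n) (hm : ((1:ℤ),(3:ℤ)) ∈ E2c) :
    toFun T ⟨(1,3), hm⟩ = (phiT T).2.1 := by
  norm_num [toFun]

lemma toFun_at3 (T : E1c → Fin n) (hm : ((1:ℤ),(4:ℤ)) ∈ E2c) :
    toFun T ⟨(1,4), hm⟩ = (phiT T).2.2.1 := by
  norm_num [toFun]

lemma toFun_at4 (T : E1c → Fin n) (hm : ((2:ℤ),(2:ℤ)) ∈ E2c) :
    toFun T ⟨(2,2), hm⟩ = (phiT T).2.2.2.1 := by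
  norm_num [toFun]

lemma toFun_at5 (T : E1c → Fin n) (hm : ((2:ℤ),(3:ℤ)) ∈ E2c) :
    toFun T ⟨(2,3), hm⟩ = (phiT T).2.2.2.2.1 := by
  norm_num [toFun]

lemma toFun_at6 (T : E1c → Fin n) (hm : ((3:ℤ),(1:ℤ)) ∈ E2c) :
    toFun T ⟨(3,1), hm⟩ = (phiT T).2.2.2.2.2.1 := by
  norm_num [toFun]

lemma toFun_at7 (T : E1c → Fin n) (hm : ((3:ℤ),(2:ℤ)) ∈ E2c) :
    toFun T ⟨(3,2), hm⟩ = (phiT T).2.2.2.2.2.2.1 := by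
  norm_num [toFun]

lemma toFun_at8 (T : E1c → Fin n) (hm : ((4:ℤ),(1:ℤ)) ∈ E2c) :
    toFun T ⟨(4,1), hm⟩ = (phiT T).2.2.2.2.2.2.2 := by
  norm_num [toFun]

lemma fromFun_at1 (U : E2c → Fin n) (hm : ((1:ℤ),(3:ℤ)) ∈ E1c) :
    fromFun U ⟨(1,3), hm⟩ = (psiT U).1 := by
  norm_num [fromFun]

lemma fromFun_at2 (U : E2c → Fin n) (hm : ((1:ℤ),(4:ℤ)) ∈ E1c) :
    fromFun U ⟨(1,4), hm⟩ = (psiT U).2.1 := by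
  norm_num [fromFun]

lemma fromFun_at3 (U : E2c → Fin n) (hm : ((2:ℤ),(1:ℤ)) ∈ E1c) :
    fromFun U ⟨(2,1), hm⟩ = (psiT U).2.2.1 := by
  norm_num [fromFun]

lemma fromFun_at4 (U : E2c → Fin n) (hm : ((2:ℤ),(2:ℤ)) ∈ E1c) :
    fromFun U ⟨(2,2), hm⟩ = (psiT U).2.2.2.1 := by
  norm_num [fromFun]

lemma fromFun_at5 (U : E2c → Fin n) (hm : ((2:ℤ),(3:ℤ)) ∈ E1c) :
    fromFun U ⟨(2,3), hm⟩ = (psiT U).2.2.2.2.1 := by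
  norm_num [fromFun]

lemma fromFun_at6 (U : E2c → Fin n) (hm : ((3:ℤ),(1:ℤ)) ∈ E1c) :
    fromFun U ⟨(3,1), hm⟩ = (psiT U).2.2.2.2.2.1 := by
  norm_num [fromFun]

lemma fromFun_at7 (U : E2c → Fin n) (hm : ((3:ℤ),(2:ℤ)) ∈ E1c) :
    fromFun U ⟨(3,2), hm⟩ = (psiT U).2.2.2.2.2.2.1 := by
  norm_num [fromFun]

lemma fromFun_at8 (U : E2c → Fin n) (hm : ((4:ℤ),(1:ℤ)) ∈ E1c) :
    fromFun U ⟨(4,1), hm⟩ = (psiT U).2.2.2.2.2.2.2 := by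
  norm_num [fromFun]

lemma to_issyt (T : E1c → Fin n) (hT : IsSSYT E1c T) : IsSSYT E2c (toFun T) := by
  rw [char1] at hT
  obtain ⟨H1, H2, H3, H4, H5, H6, H7, H8⟩ := hT
  have S := phi_spec _ _ _ _ _ _ _ _ H1 H2 H3 H4 H5 H6 H7 H8 ((phiT T).1) ((phiT T).2.1) ((phiT T).2.2.1) ((phiT T).2.2.2.1) ((phiT T).2.2.2.2.1) ((phiT T).2.2.2.2.2.1) ((phiT T).2.2.2.2.2.2.1) ((phiT T).2.2.2.2.2.2.2) rfl
  rw [char2]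
  simpa only [toFun_at1, toFun_at2, toFun_at3, toFun_at4, toFun_at5, toFun_at6, toFun_at7, toFun_at8] using S

lemma from_issyt (U : E2c → Fin n) (hU : IsSSYT E2c U) : IsSSYT E1c (fromFun U) := by
  rw [char2] at hU
  obtain ⟨H1, H2, H3, H4, H5, H6, H7, H8⟩ := hU
  have S := psi_spec _ _ _ _ _ _ _ _ H1 H2 H3 H4 H5 H6 H7 H8 ((psiT U).1) ((psiT U).2.1) ((psiT U).2.2.1) ((psiT U).2.2.2.1) ((psiT U).2.2.2.2.1) ((psiT U).2.2.2.2.2.1) ((psiT U).2.2.2.2.2.2.1) ((psiT U).2.2.2.2.2.2.2) rfl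
  rw [char1]
  simpa only [fromFun_at1, fromFun_at2, fromFun_at3, fromFun_at4, fromFun_at5, fromFun_at6, fromFun_at7, fromFun_at8] using S

lemma from_to (T : E1c → Fin n) (hT : IsSSYT E1c T) : fromFun (toFun T) = T := by
  rw [char1] at hT
  obtain ⟨H1, H2, H3, H4, H5, H6, H7, H8⟩ := hT
  have K := phi_inv _ _ _ _ _ _ _ _ H1 H2 H3 H4 H5 H6 H7 H8 ((phiT T).1) ((phiT T).2.1) ((phiT T).2.2.1) ((phiT T).2.2.2.1) ((phiT T).2.2.2.2.1) ((phiT T).2.2.2.2.2.1) ((phiT T).2.2.2.2.2.2.1) ((phiT T).2.2.2.2.2.2.2) rfl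
  funext c
  obtain ⟨z, hz⟩ := c
  have hz' := hz; simp only [E1c, Finset.mem_insert, Finset.mem_singleton] at hz'; rcases hz' with rfl | rfl | rfl | rfl | rfl | rfl | rfl | rfl <;>
    simp only [fromFun_at1, fromFun_at2, fromFun_at3, fromFun_at4, fromFun_at5, fromFun_at6, fromFun_at7, fromFun_at8, toFun_at1, toFun_at2, toFun_at3, toFun_at4, toFun_at5, toFun_at6, toFun_at7, toFun_at8, psiT, K]

lemma to_from (U : E2c → Fin n) (hU : IsSSYT E2c U) : toFun (fromFun U) = U := by
  rw [char2] at hU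
  obtain ⟨H1, H2, H3, H4, H5, H6, H7, H8⟩ := hU
  have K := psi_inv _ _ _ _ _ _ _ _ H1 H2 H3 H4 H5 H6 H7 H8 ((psiT U).1) ((psiT U).2.1) ((psiT U).2.2.1) ((psiT U).2.2.2.1) ((psiT U).2.2.2.2.1) ((psiT U).2.2.2.2.2.1) ((psiT U).2.2.2.2.2.2.1) ((psiT U).2.2.2.2.2.2.2) rfl
  funext c
  obtain ⟨z, hz⟩ := c
  have hz' := hz; simp only [E2c, Finset.mem_insert, Finset.mem_singleton] at hz'; rcases hz' with rfl | rfl | rfl | rfl | rfl | rfl | rfl | rfl <;>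
    simp only [toFun_at1, toFun_at2, toFun_at3, toFun_at4, toFun_at5, toFun_at6, toFun_at7, toFun_at8, fromFun_at1, fromFun_at2, fromFun_at3, fromFun_at4, fromFun_at5, fromFun_at6, fromFun_at7, fromFun_at8, phiT, K]

lemma prod_eq (T : E1c → Fin n) :
    ∏ c : E1c, (MvPolynomial.X (T c) : MvPolynomial (Fin n) ℤ) =
      ∏ c : E2c, MvPolynomial.X (toFun T c) := by
  rw [prodE1, prodE2]
  simp only [toFun_at1, toFun_at2, toFun_at3, toFun_at4, toFun_at5, toFun_at6, toFun_at7, toFun_at8]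
  exact (phi_prod MvPolynomial.X _ _ _ _ _ _ _ _ _ _ _ _ _ _ _ _ rfl).symm

lemma main (n : ℕ) : skewSchurPoly E1c n = skewSchurPoly E2c n := by
  classical
  simp only [skewSchurPoly]
  rw [← Finset.sum_filter, ← Finset.sum_filter]
  refine Finset.sum_nbij' (fun T => toFun T) (fun U => fromFun U) ?_ ?_ ?_ ?_ ?_
  · intro T hT
    simp only [Finset.mem_filter, Finset.mem_univ, true_and] at hT ⊢
    exact to_issyt T hT
  · intro U hU
    simp only [Finset.mem_filter, Finset.mem_univ, true_and] at hU ⊢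
    exact from_issyt U hU
  · intro T hT
    simp only [Finset.mem_filter, Finset.mem_univ, true_and] at hT
    exact from_to T hT
  · intro U hU
    simp only [Finset.mem_filter, Finset.mem_univ, true_and] at hU
    exact to_from U hU
  · intro T hT
    exact prod_eq T

end SkewEquivAux4321

/-- The skew diagrams (4,3,2,1)/(2) and (4,3,2,1)/(1,1) have equal skew Schur functions. -/
theorem skew_equiv_4321 :
    ∀ n : ℕ, 1 ≤ n →
      skewSchurPoly (skewCells [4, 3, 2, 1] [2]) n =
        skewSchurPoly (skewCells [4, 3, 2, 1] [1, 1]) n := by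
  intro n hn
  have h1 : skewCells [4, 3, 2, 1] [2] = SkewEquivAux4321.E1c := by decide
  have h2 : skewCells [4, 3, 2, 1] [1, 1] = SkewEquivAux4321.E2c := by decide
  rw [h1, h2]
  exact SkewEquivAux4321.main n
end
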